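/- arXiv:2012.07835 — 9 statements merged into one kernel-verified Lean document; each statement's English description precedes it below -/
import Mathlib

section
/- Let U1, U2 : ℝ → ℝ and V1, V2 : ℝ → ℝ be continuous functions on open intervals ]u_min, u_max[ and ]v_min, v_max[ respectively. Fix a center M = (u0, v0) and a vector δ = (α, β) such that the closed rectangle with center M and half-sides |α|, |β| is contained in ]u_min, u_max[ × ]v_min, v_max[. Then ∫_{-1}^{1} [α²(U1(u0 + tα) + V1(v0 + tβ)) + β²(U2(u0 + tα) + V2(v0 + tβ))] dt = ∫_{-1}^{1} [α²(U1(u0 − tα) + V1(v0 + tβ)) + β²(U2(u0 − tα) + V2(v0 + tβ))] dt. In other words, on a surface with orthogonal Liouville line element ds² = (U1(u)+V1(v))du² + (U2(u)+V2(v))dv², the two diagonals of every rectangle formed by parameter lines have the same energy. -/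
/-- On a surface with orthogonal Liouville line element
`ds² = (U1(u)+V1(v))du² + (U2(u)+V2(v))dv²`, the two diagonals of every
rectangle formed by parameter lines have the same energy. -/
theorem liouville_diagonals_equal_energy
    (umin umax vmin vmax : ℝ)
    (U1 U2 V1 V2 : ℝ → ℝ)
    (hU1 : ContinuousOn U1 (Set.Ioo umin umax))
    (hU2 : ContinuousOn U2 (Set.Ioo umin umax))
    (hV1 : ContinuousOn V1 (Set.Ioo vmin vmax))
    (hV2 : ContinuousOn V2 (Set.Ioo vmin vmax))
    (u0 v0 α β : ℝ)
    (hu : Set.Icc (u0 - |α|) (u0 + |α|) ⊆ Set.Ioo umin umax)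
    (hv : Set.Icc (v0 - |β|) (v0 + |β|) ⊆ Set.Ioo vmin vmax) :
    (∫ t in (-1:ℝ)..1,
        (α ^ 2 * (U1 (u0 + t * α) + V1 (v0 + t * β)) +
         β ^ 2 * (U2 (u0 + t * α) + V2 (v0 + t * β)))) =
    (∫ t in (-1:ℝ)..1,
        (α ^ 2 * (U1 (u0 - t * α) + V1 (v0 + t * β)) +
         β ^ 2 * (U2 (u0 - t * α) + V2 (v0 + t * β)))) := by
  have ht : ∀ t ∈ Set.uIcc (-1:ℝ) 1, |t| ≤ 1 := by
    intro t ht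
    rw [Set.uIcc_of_le (by norm_num)] at ht
    exact abs_le.2 ⟨ht.1, ht.2⟩
  have hmapp : ∀ t ∈ Set.uIcc (-1:ℝ) 1, u0 + t * α ∈ Set.Ioo umin umax := by
    intro t htm
    apply hu
    have h1 : |t * α| ≤ |α| := by
      rw [abs_mul]
      calc |t| * |α| ≤ 1 * |α| := by gcongr; exact ht t htm
        _ = |α| := one_mul _
    rw [abs_le] at h1
    constructor <;> linarith [h1.1, h1.2]
  have hmapm : ∀ t ∈ Set.uIcc (-1:ℝ) 1, u0 - t * α ∈ Set.Ioo umin umax := by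
    intro t htm
    apply hu
    have h1 : |t * α| ≤ |α| := by
      rw [abs_mul]
      calc |t| * |α| ≤ 1 * |α| := by gcongr; exact ht t htm
        _ = |α| := one_mul _
    rw [abs_le] at h1
    constructor <;> linarith [h1.1, h1.2]
  have hmapv : ∀ t ∈ Set.uIcc (-1:ℝ) 1, v0 + t * β ∈ Set.Ioo vmin vmax := by
    intro t htm
    apply hv
    have h1 : |t * β| ≤ |β| := by
      rw [abs_mul]
      calc |t| * |β| ≤ 1 * |β| := by gcongr; exact ht t htm
        _ = |β| := one_mul _
    rw [abs_le] at h1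
    constructor <;> linarith [h1.1, h1.2]
  have cline : Continuous fun t : ℝ => u0 + t * α := by continuity
  have clinem : Continuous fun t : ℝ => u0 - t * α := by continuity
  have clinev : Continuous fun t : ℝ => v0 + t * β := by continuity
  have iU1p : IntervalIntegrable (fun t => U1 (u0 + t * α)) MeasureTheory.volume (-1) 1 :=
    (hU1.comp cline.continuousOn hmapp).intervalIntegrable
  have iU1m : IntervalIntegrable (fun t => U1 (u0 - t * α)) MeasureTheory.volume (-1) 1 :=
    (hU1.comp clinem.continuousOn hmapm).intervalIntegrable
  have iU2p : IntervalIntegrable (fun t => U2 (u0 + t * α)) MeasureTheory.volume (-1) 1 :=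
    (hU2.comp cline.continuousOn hmapp).intervalIntegrable
  have iU2m : IntervalIntegrable (fun t => U2 (u0 - t * α)) MeasureTheory.volume (-1) 1 :=
    (hU2.comp clinem.continuousOn hmapm).intervalIntegrable
  have iV1 : IntervalIntegrable (fun t => V1 (v0 + t * β)) MeasureTheory.volume (-1) 1 :=
    (hV1.comp clinev.continuousOn hmapv).intervalIntegrable
  have iV2 : IntervalIntegrable (fun t => V2 (v0 + t * β)) MeasureTheory.volume (-1) 1 :=
    (hV2.comp clinev.continuousOn hmapv).intervalIntegrable
  have key : ∀ f : ℝ → ℝ, (∫ t in (-1:ℝ)..1, f (u0 - t * α)) = ∫ t in (-1:ℝ)..1, f (u0 + t * α) := by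
    intro f
    have := intervalIntegral.integral_comp_neg (a := (-1:ℝ)) (b := 1) (f := fun t => f (u0 + t * α))
    simpa [neg_mul, ← sub_eq_add_neg] using this
  have expand : ∀ (A B : ℝ → ℝ), IntervalIntegrable A MeasureTheory.volume (-1) 1 →
      IntervalIntegrable B MeasureTheory.volume (-1) 1 →
      (∫ t in (-1:ℝ)..1, (α ^ 2 * (A t + V1 (v0 + t * β)) + β ^ 2 * (B t + V2 (v0 + t * β)))) =
      α ^ 2 * ((∫ t in (-1:ℝ)..1, A t) + ∫ t in (-1:ℝ)..1, V1 (v0 + t * β)) +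
      β ^ 2 * ((∫ t in (-1:ℝ)..1, B t) + ∫ t in (-1:ℝ)..1, V2 (v0 + t * β)) := by
    intro A B hA hB
    rw [intervalIntegral.integral_add (((hA.add iV1)).const_mul _) ((hB.add iV2).const_mul _),
        intervalIntegral.integral_const_mul, intervalIntegral.integral_const_mul,
        intervalIntegral.integral_add hA iV1, intervalIntegral.integral_add hB iV2]
  rw [expand _ _ iU1p iU2p, expand _ _ iU1m iU2m, key U1, key U2]
end

section
/- Let g11, g12, g22 : ℝ² → ℝ be continuous on an open rectangle D = ]u_min, u_max[ × ]v_min, v_max[, forming the symmetric metric matrix G(u,v) = [[g11, g12],[g12, g22]]. Assume that for every center M = (u0, v0) ∈ D and every offset δ = (α, β) such that the corresponding closed rectangle lies in D, the energies of the two diagonals are equal: ∫_{-1}^{1} ḋ1(t)ᵀ G(d1(t)) ḋ1(t) dt = ∫_{-1}^{1} ḋ2(t)ᵀ G(d2(t)) ḋ2(t) dt, where d1(t) = M + t(α,β) and d2(t) = M + t(−α,β). Then g12(u, v) = 0 for all (u, v) ∈ D. -/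
open Filter Topology intervalIntegral MeasureTheory

/-- If the two diagonals of every parameter-line rectangle inside the domain
`D = ]u_min,u_max[ × ]v_min,v_max[` have the same energy for the metric
`G = [[g11,g12],[g12,g22]]`, then `g12 ≡ 0` on `D`. -/
theorem equal_diagonal_energy_implies_orthogonal
    (umin umax vmin vmax : ℝ)
    (g11 g12 g22 : ℝ × ℝ → ℝ)
    (hg11 : ContinuousOn g11 (Set.Ioo umin umax ×ˢ Set.Ioo vmin vmax))
    (hg12 : ContinuousOn g12 (Set.Ioo umin umax ×ˢ Set.Ioo vmin vmax))
    (hg22 : ContinuousOn g22 (Set.Ioo umin umax ×ˢ Set.Ioo vmin vmax))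
    (hE : ∀ u0 v0 α β : ℝ,
      Set.Icc (u0 - |α|) (u0 + |α|) ⊆ Set.Ioo umin umax →
      Set.Icc (v0 - |β|) (v0 + |β|) ⊆ Set.Ioo vmin vmax →
      (∫ t in (-1:ℝ)..1,
          (α ^ 2 * g11 (u0 + t * α, v0 + t * β) +
           2 * α * β * g12 (u0 + t * α, v0 + t * β) +
           β ^ 2 * g22 (u0 + t * α, v0 + t * β))) =
      (∫ t in (-1:ℝ)..1,
          (α ^ 2 * g11 (u0 - t * α, v0 + t * β) -
           2 * α * β * g12 (u0 - t * α, v0 + t * β) +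
           β ^ 2 * g22 (u0 - t * α, v0 + t * β)))) :
    ∀ p ∈ Set.Ioo umin umax ×ˢ Set.Ioo vmin vmax, g12 p = 0 := by
  rintro ⟨u0, v0⟩ hp
  obtain ⟨hu, hv⟩ := hp
  set D : Set (ℝ × ℝ) := Set.Ioo umin umax ×ˢ Set.Ioo vmin vmax with hD
  have hDopen : IsOpen D := (isOpen_Ioo.prod isOpen_Ioo)
  have hpD : ((u0, v0) : ℝ × ℝ) ∈ D := ⟨hu, hv⟩
  set a : ℝ := min (min (u0 - umin) (umax - u0)) (min (v0 - vmin) (vmax - v0)) with ha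
  have ha1 : a ≤ u0 - umin := (min_le_left _ _).trans (min_le_left _ _)
  have ha2 : a ≤ umax - u0 := (min_le_left _ _).trans (min_le_right _ _)
  have ha3 : a ≤ v0 - vmin := (min_le_right _ _).trans (min_le_left _ _)
  have ha4 : a ≤ vmax - v0 := (min_le_right _ _).trans (min_le_right _ _)
  have ha0 : 0 < a := by
    simp only [ha, lt_min_iff]
    exact ⟨⟨by linarith [hu.1], by linarith [hu.2]⟩, ⟨by linarith [hv.1], by linarith [hv.2]⟩⟩
  set ε0 : ℝ := a / 2 with hε0def
  have hε0 : 0 < ε0 := by positivity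
  set K : Set (ℝ × ℝ) := Set.Icc (u0 - ε0) (u0 + ε0) ×ˢ Set.Icc (v0 - ε0) (v0 + ε0) with hK
  have hKD : K ⊆ D := by
    rintro ⟨x, y⟩ ⟨hx, hy⟩
    exact ⟨⟨by simp at hx; linarith [hx.1], by simp at hx; linarith [hx.2]⟩,
           ⟨by simp at hy; linarith [hy.1], by simp at hy; linarith [hy.2]⟩⟩
  have hKc : IsCompact K := isCompact_Icc.prod isCompact_Icc
  obtain ⟨C1, hC1⟩ := hKc.exists_bound_of_continuousOn (hg11.mono hKD)
  obtain ⟨C2, hC2⟩ := hKc.exists_bound_of_continuousOn (hg12.mono hKD)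
  obtain ⟨C3, hC3⟩ := hKc.exists_bound_of_continuousOn (hg22.mono hKD)
  -- membership in K of the diagonal points
  have hmemK : ∀ s t : ℝ, |s| ≤ ε0 → t ∈ Set.Icc (-1:ℝ) 1 →
      ((u0 + t * s, v0 + t * s) ∈ K ∧ (u0 - t * s, v0 + t * s) ∈ K) := by
    intro s t hs ht
    have h1 : |t * s| ≤ ε0 := by
      rw [abs_mul]
      calc |t| * |s| ≤ 1 * ε0 :=
        mul_le_mul (abs_le.mpr ⟨ht.1, ht.2⟩) hs (abs_nonneg s) one_pos.le
      _ = ε0 := one_mul _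
    obtain ⟨h2, h3⟩ := abs_le.mp h1
    simp only [hK, Set.mem_prod, Set.mem_Icc]
    refine ⟨⟨⟨by linarith, by linarith⟩, by linarith, by linarith⟩,
            ⟨by linarith, by linarith⟩, by linarith, by linarith⟩
  -- the key integrand family
  set F : ℝ → ℝ → ℝ := fun ε t =>
    (g11 (u0 + t * ε, v0 + t * ε) - g11 (u0 - t * ε, v0 + t * ε)) +
    2 * (g12 (u0 + t * ε, v0 + t * ε) + g12 (u0 - t * ε, v0 + t * ε)) +
    (g22 (u0 + t * ε, v0 + t * ε) - g22 (u0 - t * ε, v0 + t * ε)) with hF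
  -- continuity of composed maps
  have hcomp : ∀ g : ℝ × ℝ → ℝ, ContinuousOn g D → ∀ s : ℝ, |s| ≤ ε0 →
      ContinuousOn (fun t => g (u0 + t * s, v0 + t * s)) (Set.Icc (-1:ℝ) 1) ∧
      ContinuousOn (fun t => g (u0 - t * s, v0 + t * s)) (Set.Icc (-1:ℝ) 1) := by
    intro g hg s hs
    constructor
    · exact hg.comp (by fun_prop) (fun t ht => hKD (hmemK s t hs ht).1)
    · exact hg.comp (by fun_prop) (fun t ht => hKD (hmemK s t hs ht).2)
  have hFcont : ∀ s : ℝ, |s| ≤ ε0 → ContinuousOn (F s) (Set.Icc (-1:ℝ) 1) := by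
    intro s hs
    exact (((hcomp g11 hg11 s hs).1.sub (hcomp g11 hg11 s hs).2).add
      (continuousOn_const.mul ((hcomp g12 hg12 s hs).1.add (hcomp g12 hg12 s hs).2))).add
      ((hcomp g22 hg22 s hs).1.sub (hcomp g22 hg22 s hs).2)
  -- for small positive ε, the integral of F ε vanishes
  have hzero : ∀ ε : ℝ, ε ∈ Set.Ioc (0:ℝ) ε0 → (∫ t in (-1:ℝ)..1, F ε t) = 0 := by
    rintro ε ⟨hεpos, hεle⟩
    have hεabs : |ε| ≤ ε0 := by rw [abs_of_pos hεpos]; exact hεle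
    have h1 : Set.Icc (u0 - |ε|) (u0 + |ε|) ⊆ Set.Ioo umin umax := by
      rw [abs_of_pos hεpos]
      intro x hx
      exact ⟨by linarith [hx.1], by linarith [hx.2]⟩
    have h2 : Set.Icc (v0 - |ε|) (v0 + |ε|) ⊆ Set.Ioo vmin vmax := by
      rw [abs_of_pos hεpos]
      intro x hx
      exact ⟨by linarith [hx.1], by linarith [hx.2]⟩
    have key := hE u0 v0 ε ε h1 h2
    have hL : IntervalIntegrable (fun t =>
        ε ^ 2 * g11 (u0 + t * ε, v0 + t * ε) + 2 * ε * ε * g12 (u0 + t * ε, v0 + t * ε) +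
        ε ^ 2 * g22 (u0 + t * ε, v0 + t * ε)) MeasureTheory.volume (-1) 1 := by
      apply ContinuousOn.intervalIntegrable
      rw [Set.uIcc_of_le (by norm_num : (-1:ℝ) ≤ 1)]
      exact ((continuousOn_const.mul (hcomp g11 hg11 ε hεabs).1).add
        (continuousOn_const.mul (hcomp g12 hg12 ε hεabs).1)).add
        (continuousOn_const.mul (hcomp g22 hg22 ε hεabs).1)
    have hR : IntervalIntegrable (fun t =>
        ε ^ 2 * g11 (u0 - t * ε, v0 + t * ε) - 2 * ε * ε * g12 (u0 - t * ε, v0 + t * ε) +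
        ε ^ 2 * g22 (u0 - t * ε, v0 + t * ε)) MeasureTheory.volume (-1) 1 := by
      apply ContinuousOn.intervalIntegrable
      rw [Set.uIcc_of_le (by norm_num : (-1:ℝ) ≤ 1)]
      exact ((continuousOn_const.mul (hcomp g11 hg11 ε hεabs).2).sub
        (continuousOn_const.mul (hcomp g12 hg12 ε hεabs).2)).add
        (continuousOn_const.mul (hcomp g22 hg22 ε hεabs).2)
    have hsub : (∫ t in (-1:ℝ)..1, (ε ^ 2 * F ε t)) = 0 := by
      have heq : (∫ t in (-1:ℝ)..1, (ε ^ 2 * F ε t)) =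
          ∫ t in (-1:ℝ)..1,
            ((ε ^ 2 * g11 (u0 + t * ε, v0 + t * ε) + 2 * ε * ε * g12 (u0 + t * ε, v0 + t * ε) +
              ε ^ 2 * g22 (u0 + t * ε, v0 + t * ε)) -
             (ε ^ 2 * g11 (u0 - t * ε, v0 + t * ε) - 2 * ε * ε * g12 (u0 - t * ε, v0 + t * ε) +
              ε ^ 2 * g22 (u0 - t * ε, v0 + t * ε))) := by
        apply intervalIntegral.integral_congr
        intro t _
        simp only [hF]
        ring
      rw [heq, intervalIntegral.integral_sub hL hR, key, sub_self]
    rw [intervalIntegral.integral_const_mul] at hsub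
    have hε2 : ε ^ 2 ≠ 0 := pow_ne_zero 2 (ne_of_gt hεpos)
    exact (mul_eq_zero.mp hsub).resolve_left hε2
  -- the limit of the integrals as ε → 0⁺
  have hlim : Tendsto (fun ε => ∫ t in (-1:ℝ)..1, F ε t) (𝓝[>] (0:ℝ))
      (𝓝 (∫ t in (-1:ℝ)..1, (4 * g12 (u0, v0)))) := by
    apply intervalIntegral.tendsto_integral_filter_of_dominated_convergence
      (bound := fun _ => 2 * C1 + 4 * C2 + 2 * C3)
    · filter_upwards [Ioc_mem_nhdsGT_of_mem (Set.left_mem_Ico.mpr hε0)] with ε hε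
      have hεabs : |ε| ≤ ε0 := by rw [abs_of_pos hε.1]; exact hε.2
      have hsubset : Set.uIoc (-1:ℝ) 1 ⊆ Set.Icc (-1:ℝ) 1 := by
        rw [Set.uIoc_of_le (by norm_num : (-1:ℝ) ≤ 1)]
        exact Set.Ioc_subset_Icc_self
      exact ((hFcont ε hεabs).mono hsubset).aestronglyMeasurable measurableSet_uIoc
    · filter_upwards [Ioc_mem_nhdsGT_of_mem (Set.left_mem_Ico.mpr hε0)] with ε hε
      have hεabs : |ε| ≤ ε0 := by rw [abs_of_pos hε.1]; exact hε.2
      apply MeasureTheory.ae_of_all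
      intro t ht
      rw [Set.uIoc_of_le (by norm_num : (-1:ℝ) ≤ 1)] at ht
      have htI : t ∈ Set.Icc (-1:ℝ) 1 := ⟨le_of_lt ht.1, ht.2⟩
      obtain ⟨hm1, hm2⟩ := hmemK ε t hεabs htI
      have b1 := abs_le.mp (hC1 _ hm1)
      have b2 := abs_le.mp (hC1 _ hm2)
      have b3 := abs_le.mp (hC2 _ hm1)
      have b4 := abs_le.mp (hC2 _ hm2)
      have b5 := abs_le.mp (hC3 _ hm1)
      have b6 := abs_le.mp (hC3 _ hm2)
      rw [Real.norm_eq_abs]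
      apply abs_le.mpr
      constructor
      · simp only [hF]; linarith
      · simp only [hF]; linarith
    · exact intervalIntegrable_const
    · apply MeasureTheory.ae_of_all
      intro t _
      have hpath1 : Tendsto (fun ε : ℝ => ((u0 + t * ε, v0 + t * ε) : ℝ × ℝ)) (𝓝[>] 0)
          (𝓝 (u0, v0)) := by
        have : Continuous (fun ε : ℝ => ((u0 + t * ε, v0 + t * ε) : ℝ × ℝ)) := by fun_prop
        have h := this.tendsto 0
        simp only [mul_zero, add_zero] at h
        exact h.mono_left nhdsWithin_le_nhds
      have hpath2 : Tendsto (fun ε : ℝ => ((u0 - t * ε, v0 + t * ε) : ℝ × ℝ)) (𝓝[>] 0)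
          (𝓝 (u0, v0)) := by
        have : Continuous (fun ε : ℝ => ((u0 - t * ε, v0 + t * ε) : ℝ × ℝ)) := by fun_prop
        have h := this.tendsto 0
        simp only [mul_zero, add_zero, sub_zero] at h
        exact h.mono_left nhdsWithin_le_nhds
      have c11 := hg11.continuousAt (hDopen.mem_nhds hpD)
      have c12 := hg12.continuousAt (hDopen.mem_nhds hpD)
      have c22 := hg22.continuousAt (hDopen.mem_nhds hpD)
      have T : Tendsto (fun ε => F ε t) (𝓝[>] (0:ℝ))
          (𝓝 ((g11 (u0, v0) - g11 (u0, v0)) +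
            2 * (g12 (u0, v0) + g12 (u0, v0)) + (g22 (u0, v0) - g22 (u0, v0)))) := by
        exact (((c11.tendsto.comp hpath1).sub (c11.tendsto.comp hpath2)).add
          (tendsto_const_nhds.mul ((c12.tendsto.comp hpath1).add (c12.tendsto.comp hpath2)))).add
          ((c22.tendsto.comp hpath1).sub (c22.tendsto.comp hpath2))
      have : (g11 (u0, v0) - g11 (u0, v0)) + 2 * (g12 (u0, v0) + g12 (u0, v0)) +
          (g22 (u0, v0) - g22 (u0, v0)) = 4 * g12 (u0, v0) := by ring
      rwa [this] at T
  -- the integrals are eventually 0, so the limit is 0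
  have hzero' : Tendsto (fun ε => ∫ t in (-1:ℝ)..1, F ε t) (𝓝[>] (0:ℝ)) (𝓝 0) := by
    apply Tendsto.congr' _ tendsto_const_nhds
    filter_upwards [Ioc_mem_nhdsGT_of_mem (Set.left_mem_Ico.mpr hε0)] with ε hε
    exact (hzero ε hε).symm
  have huniq := tendsto_nhds_unique hlim hzero'
  rw [intervalIntegral.integral_const] at huniq
  simp at huniq
  linarith
end

section
/- Let g11, g22 : ℝ² → ℝ be twice continuously differentiable on an open rectangle D, and let G(u,v) = diag(g11(u,v), g22(u,v)). Assume that for every center M = (u0, v0) ∈ D and every α ≠ 0 such that the closed square with center M and corner offset (α, α) lies in D, the energies of the two diagonals of that square are equal: ∫_{-1}^{1} ḋ1(t)ᵀ G(d1(t)) ḋ1(t) dt = ∫_{-1}^{1} ḋ2(t)ᵀ G(d2(t)) ḋ2(t) dt, where d1(t) = M + t(α, α) and d2(t) = M + t(−α, α). Then ∂²g11/∂u∂v (u0, v0) + ∂²g22/∂u∂v (u0, v0) = 0 at every point (u0, v0) ∈ D. -/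
/-!
Write `F = g₁₁ + g₂₂`. Substituting `s = tα`, the two diagonal energies of the square of radius
`a` centred at `q` are `a ∫_{-a}^{a} F(q + (s, s)) ds` and `a ∫_{-a}^{a} F(q + (-s, s)) ds`.
Their equality for all small `a`, differentiated in `a`, says that the alternating sum of `F`
over the four corners of every small square vanishes. Dividing this second difference by the
squared side length and letting the square shrink to a point yields `∂u∂v F = 0`.
-/

open Set Filter Topology Asymptotics Metric

section Integrals

variable {E : Type*} [NormedAddCommGroup E] [NormedSpace ℝ E]

theorem integral_eq_of_sq_smul_integral_comp_mul_eq {f g : ℝ → E} {α : ℝ} (hα : α ≠ 0)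
    (h : ∫ t in (-1 : ℝ)..1, α ^ 2 • f (t * α) = ∫ t in (-1 : ℝ)..1, α ^ 2 • g (t * α)) :
    ∫ s in (-α)..α, f s = ∫ s in (-α)..α, g s := by
  simp only [intervalIntegral.integral_smul, pow_two, mul_smul,
    intervalIntegral.smul_integral_comp_mul_right, neg_one_mul, one_mul] at h
  exact smul_right_injective E hα h

theorem add_apply_neg_eq_zero_of_integral_eq_zero [CompleteSpace E] {g : ℝ → E} {b : ℝ}
    (hg : ContinuousOn g (Ioo (-b) b)) (h0 : ∀ a ∈ Ioo 0 b, ∫ s in (-a)..a, g s = 0)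
    {c : ℝ} (hc : c ∈ Ioo 0 b) : g c + g (-c) = 0 := by
  obtain ⟨hc0, hcb⟩ := hc
  have hint : ∀ x ∈ Ioo (-b) b, IntervalIntegrable g MeasureTheory.volume 0 x := fun x hx =>
    (hg.mono (ordConnected_Ioo.uIcc_subset ⟨by linarith, by linarith⟩ hx)).intervalIntegrable
  have hprim : ∀ x ∈ Ioo (-b) b, HasDerivAt (fun y => ∫ s in (0 : ℝ)..y, g s) (g x) x :=
    fun x hx => intervalIntegral.integral_hasDerivAt_right (hint x hx)
      (hg.stronglyMeasurableAtFilter isOpen_Ioo x hx) (hg.continuousAt (isOpen_Ioo.mem_nhds hx))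
  have hsym : HasDerivAt (fun a => (∫ s in (0 : ℝ)..a, g s) - ∫ s in (0 : ℝ)..(-a), g s)
      (g c + g (-c)) c := by
    have hneg := (hprim (-c) ⟨by linarith, by linarith⟩).scomp c (hasDerivAt_neg c)
    have := (hprim c ⟨by linarith, hcb⟩).sub hneg
    simp only [neg_one_smul, sub_neg_eq_add] at this
    exact this
  have hzero : (fun a => (∫ s in (0 : ℝ)..a, g s) - ∫ s in (0 : ℝ)..(-a), g s) =ᶠ[𝓝 c]
      fun _ => 0 := by
    filter_upwards [isOpen_Ioo.mem_nhds ⟨hc0, hcb⟩] with a ⟨ha0, hab⟩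
    rw [intervalIntegral.integral_interval_sub_left (hint a ⟨by linarith, hab⟩)
      (hint (-a) ⟨by linarith, by linarith⟩), h0 a ⟨ha0, hab⟩]
  exact hsym.unique ((hasDerivAt_const c 0).congr_of_eventuallyEq hzero)

end Integrals

theorem Icc_subset_of_closedBall_subset_prod {q : ℝ × ℝ} {a : ℝ} {s t : Set ℝ}
    (h : closedBall q a ⊆ s ×ˢ t) :
    Icc (q.1 - a) (q.1 + a) ⊆ s ∧ Icc (q.2 - a) (q.2 + a) ⊆ t := by
  obtain ⟨u, v⟩ := q
  rw [← closedBall_prod_same] at h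
  rw [← Real.closedBall_eq_Icc, ← Real.closedBall_eq_Icc]
  exact ⟨fun x hx => (h (mk_mem_prod hx (mem_closedBall_self (dist_nonneg.trans hx)))).1,
    fun y hy => (h (mk_mem_prod (mem_closedBall_self (dist_nonneg.trans hy)) hy)).2⟩

theorem square_corner_sum_eq_zero_of_diagonal_integral_eq {E : Type*} [NormedAddCommGroup E]
    [NormedSpace ℝ E] [CompleteSpace E] {F : ℝ × ℝ → E} {q : ℝ × ℝ} {r : ℝ}
    (hF : ContinuousOn F (ball q r))
    (h : ∀ a ∈ Ioo 0 r,
      ∫ s in (-a)..a, F (q.1 + s, q.2 + s) = ∫ s in (-a)..a, F (q.1 - s, q.2 + s))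
    {a : ℝ} (ha : a ∈ Ioo 0 r) :
    F (q.1 + a, q.2 + a) - F (q.1 - a, q.2 + a) - F (q.1 + a, q.2 - a) + F (q.1 - a, q.2 - a)
      = 0 := by
  have hdiag : ∀ s ∈ Ioo (-r) r, (q.1 + s, q.2 + s) ∈ ball q r ∧ (q.1 - s, q.2 + s) ∈ ball q r := by
    intro s hs
    simp only [mem_ball, Prod.dist_eq, Real.dist_eq, add_sub_cancel_left, sub_sub_cancel_left,
      abs_neg, max_self]
    exact ⟨abs_lt.2 hs, abs_lt.2 hs⟩
  have hplus : ContinuousOn (fun s => F (q.1 + s, q.2 + s)) (Ioo (-r) r) :=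
    hF.comp (by fun_prop) fun s hs => (hdiag s hs).1
  have hminus : ContinuousOn (fun s => F (q.1 - s, q.2 + s)) (Ioo (-r) r) :=
    hF.comp (by fun_prop) fun s hs => (hdiag s hs).2
  have hzero : ∀ b ∈ Ioo 0 r,
      ∫ s in (-b)..b, (F (q.1 + s, q.2 + s) - F (q.1 - s, q.2 + s)) = 0 := by
    rintro b ⟨hb0, hbr⟩
    have hsub : uIcc (-b) b ⊆ Ioo (-r) r :=
      ordConnected_Ioo.uIcc_subset ⟨by linarith, by linarith⟩ ⟨by linarith, hbr⟩
    rw [intervalIntegral.integral_sub ((hplus.mono hsub).intervalIntegrable)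
      ((hminus.mono hsub).intervalIntegrable), h b ⟨hb0, hbr⟩, sub_self]
  have hsym := add_apply_neg_eq_zero_of_integral_eq_zero (hplus.sub hminus) hzero ha
  simp only [Pi.sub_apply, ← sub_eq_add_neg, sub_neg_eq_add] at hsym
  rw [← hsym]
  abel

theorem eventually_alternate_sum_eq_zero_of_square_corner_sum_eq_zero {E : Type*}
    [AddCommGroup E] {F : ℝ × ℝ → E} {p : ℝ × ℝ} {r : ℝ} (hr : 0 < r)
    (h : ∀ q ∈ ball p r, ∀ a ∈ Ioo 0 r,
      F (q.1 + a, q.2 + a) - F (q.1 - a, q.2 + a) - F (q.1 + a, q.2 - a) + F (q.1 - a, q.2 - a)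
        = 0) :
    ∀ᶠ t in 𝓝[>] (0 : ℝ),
      F (p + t • (2 • ((1 : ℝ), (0 : ℝ)) + 2 • ((0 : ℝ), (1 : ℝ)))) + F (p + t • ((1, 0) + (0, 1)))
        - F (p + t • (2 • (1, 0) + (0, 1))) - F (p + t • ((1, 0) + 2 • (0, 1))) = 0 := by
  obtain ⟨u, v⟩ := p
  filter_upwards [Ioo_mem_nhdsGT (half_pos hr)] with t ⟨ht0, htr⟩
  have hq : (u + 3 * t / 2, v + 3 * t / 2) ∈ ball (u, v) r := by
    simp only [mem_ball, Prod.dist_eq, Real.dist_eq, add_sub_cancel_left, max_self]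
    rw [abs_of_pos (by positivity)]
    linarith
  rw [← h _ hq (t / 2) ⟨by positivity, by linarith⟩]
  simp only [Prod.smul_mk, nsmul_eq_mul, Prod.mk_add_mk, smul_eq_mul]
  ring_nf
  abel

section SecondDerivative

variable {E F : Type*} [NormedAddCommGroup E] [NormedSpace ℝ E] [NormedAddCommGroup F]
  [NormedSpace ℝ F]

theorem eq_zero_of_sq_smul_isLittleO {a : F}
    (h : (fun t : ℝ => t ^ 2 • a) =o[𝓝[>] 0] fun t => t ^ 2) : a = 0 := by
  refine tendsto_nhds_unique (tendsto_const_nhds.congr' ?_) h.tendsto_inv_smul_nhds_zero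
  filter_upwards [self_mem_nhdsWithin] with t (ht : 0 < t)
  rw [smul_smul, inv_mul_cancel₀ (by positivity), one_smul]

theorem second_derivative_apply_eq_zero_of_alternate_sum_eq_zero {f : E → F}
    {f' : E → E →L[ℝ] F} {f'' : E →L[ℝ] E →L[ℝ] F} {x v w : E}
    (hf : ∀ᶠ y in 𝓝 x, HasFDerivAt f (f' y) y) (hx : HasFDerivAt f' f'' x)
    (hsum : ∀ᶠ t in 𝓝[>] (0 : ℝ), f (x + t • (2 • v + 2 • w)) + f (x + t • (v + w))
      - f (x + t • (2 • v + w)) - f (x + t • (v + 2 • w)) = 0) :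
    f'' v w = 0 := by
  obtain ⟨r, hr, hball⟩ := Metric.mem_nhds_iff.1 hf
  have hsmall : ∀ u : E, ∀ᶠ c in 𝓝[>] (0 : ℝ), x + (4 : ℝ) • (c • u) ∈ interior (ball x r) := by
    intro u
    have : Tendsto (fun c : ℝ => x + (4 : ℝ) • (c • u)) (𝓝 0) (𝓝 x) := by
      simpa using ((continuous_id.smul continuous_const).const_smul (4 : ℝ)).const_add x
        |>.tendsto (0 : ℝ)
    rw [isOpen_ball.interior_eq]
    exact nhdsWithin_le_nhds (this (ball_mem_nhds x hr))
  -- The Taylor estimate needs the quadrilateral inside a ball where `f` is differentiable,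
  -- so we apply it to `c • v` and `c • w` for a small `c > 0`.
  obtain ⟨c, hcv, hcw, hc : 0 < c⟩ :=
    ((hsmall v).and ((hsmall w).and self_mem_nhdsWithin)).exists
  have htaylor := (convex_ball x r).isLittleO_alternate_sum_square
    (fun y hy => hball (interior_subset hy)) (mem_ball_self hr) hx.hasFDerivWithinAt hcv hcw
  have hscaled : f'' (c • v) (c • w) = 0 := by
    refine eq_zero_of_sq_smul_isLittleO (htaylor.neg_left.congr' ?_ EventuallyEq.rfl)
    filter_upwards [eventually_nhdsGT_zero_mul_left hc hsum] with t ht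
    simp only [smul_comm (2 : ℕ) c, ← smul_add, smul_smul, mul_comm t c] at ht ⊢
    rw [ht, zero_sub, neg_neg]
  simpa [hc.ne'] using hscaled

theorem ContDiffOn.eventually_hasFDerivAt_and_hasFDerivAt_fderiv {f : E → F} {s : Set E}
    (hf : ContDiffOn ℝ 2 f s) (hs : IsOpen s) {x : E} (hx : x ∈ s) :
    (∀ᶠ y in 𝓝 x, HasFDerivAt f (fderiv ℝ f y) y) ∧
      HasFDerivAt (fderiv ℝ f) (fderiv ℝ (fderiv ℝ f) x) x :=
  ⟨eventually_of_mem (hs.mem_nhds hx) fun _ hy =>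
      ((hf.differentiableOn two_ne_zero).differentiableAt (hs.mem_nhds hy)).hasFDerivAt,
    (((hf.fderiv_of_isOpen hs (by norm_num)).differentiableOn one_ne_zero).differentiableAt
      (hs.mem_nhds hx)).hasFDerivAt⟩

theorem deriv_deriv_eq_second_derivative_apply {G : ℝ × ℝ → F}
    {G' : ℝ × ℝ → ℝ × ℝ →L[ℝ] F} {G'' : ℝ × ℝ →L[ℝ] ℝ × ℝ →L[ℝ] F} {p : ℝ × ℝ}
    (hG : ∀ᶠ q in 𝓝 p, HasFDerivAt G (G' q) q) (hG' : HasFDerivAt G' G'' p) :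
    deriv (fun u => deriv (fun v => G (u, v)) p.2) p.1 = G'' (1, 0) (0, 1) := by
  have hhor : HasDerivAt (fun u => ((u, p.2) : ℝ × ℝ)) (1, 0) p.1 :=
    (hasDerivAt_id p.1).prodMk (hasDerivAt_const p.1 p.2)
  have hinner : (fun u => deriv (fun v => G (u, v)) p.2) =ᶠ[𝓝 p.1]
      fun u => G' (u, p.2) (0, 1) := by
    filter_upwards [hhor.continuousAt.tendsto.eventually hG] with u hu
    exact (hu.comp_hasDerivAt p.2 ((hasDerivAt_const p.2 u).prodMk (hasDerivAt_id p.2))).deriv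
  have houter := (ContinuousLinearMap.apply ℝ F ((0 : ℝ), (1 : ℝ))).hasFDerivAt.comp_hasDerivAt
    p.1 (hG'.comp_hasDerivAt p.1 hhor)
  rw [hinner.deriv_eq]
  exact houter.deriv

end SecondDerivative

/-- If for a diagonal metric `G = diag(g11, g22)` the two diagonals of every
parameter-line square inside `D` have the same energy, then
`∂²g11/∂u∂v + ∂²g22/∂u∂v = 0` everywhere on `D`. -/
theorem equal_square_diagonal_energy_implies_mixed_partials_sum_zero
    (umin umax vmin vmax : ℝ)
    (g11 g22 : ℝ × ℝ → ℝ)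
    (hg11 : ContDiffOn ℝ 2 g11 (Set.Ioo umin umax ×ˢ Set.Ioo vmin vmax))
    (hg22 : ContDiffOn ℝ 2 g22 (Set.Ioo umin umax ×ˢ Set.Ioo vmin vmax))
    (hE : ∀ u0 v0 α : ℝ, α ≠ 0 →
      Set.Icc (u0 - |α|) (u0 + |α|) ⊆ Set.Ioo umin umax →
      Set.Icc (v0 - |α|) (v0 + |α|) ⊆ Set.Ioo vmin vmax →
      (∫ t in (-1:ℝ)..1,
          (α ^ 2 * g11 (u0 + t * α, v0 + t * α) +
           α ^ 2 * g22 (u0 + t * α, v0 + t * α))) =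
      (∫ t in (-1:ℝ)..1,
          (α ^ 2 * g11 (u0 - t * α, v0 + t * α) +
           α ^ 2 * g22 (u0 - t * α, v0 + t * α)))) :
    ∀ p ∈ Set.Ioo umin umax ×ˢ Set.Ioo vmin vmax,
      deriv (fun u => deriv (fun v => g11 (u, v)) p.2) p.1 +
        deriv (fun u => deriv (fun v => g22 (u, v)) p.2) p.1 = 0 := by
  intro p hp
  have hD : IsOpen (Ioo umin umax ×ˢ Ioo vmin vmax) := isOpen_Ioo.prod isOpen_Ioo
  obtain ⟨r, hr, hball⟩ := Metric.isOpen_iff.1 hD p hp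
  have hsquare : ∀ q ∈ ball p (r / 2), ∀ a ∈ Ioo 0 (r / 2),
      (g11 + g22) (q.1 + a, q.2 + a) - (g11 + g22) (q.1 - a, q.2 + a)
        - (g11 + g22) (q.1 + a, q.2 - a) + (g11 + g22) (q.1 - a, q.2 - a) = 0 := by
    intro q hq a ha
    have hqD : ball q (r / 2) ⊆ Ioo umin umax ×ˢ Ioo vmin vmax :=
      (ball_subset_ball' (by linarith [mem_ball.1 hq])).trans hball
    refine square_corner_sum_eq_zero_of_diagonal_integral_eq
      ((hg11.continuousOn.add hg22.continuousOn).mono hqD) (fun b hb => ?_) ha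
    obtain ⟨hu, hv⟩ := Icc_subset_of_closedBall_subset_prod
      ((closedBall_subset_ball hb.2).trans hqD)
    refine integral_eq_of_sq_smul_integral_comp_mul_eq hb.1.ne' ?_
    simpa only [smul_eq_mul, Pi.add_apply, mul_add] using
      hE q.1 q.2 b hb.1.ne' (by rwa [abs_of_pos hb.1]) (by rwa [abs_of_pos hb.1])
  obtain ⟨h11, h11'⟩ := hg11.eventually_hasFDerivAt_and_hasFDerivAt_fderiv hD hp
  obtain ⟨h22, h22'⟩ := hg22.eventually_hasFDerivAt_and_hasFDerivAt_fderiv hD hp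
  have hmixed := second_derivative_apply_eq_zero_of_alternate_sum_eq_zero
    ((h11.and h22).mono fun _ hy => hy.1.add hy.2) (h11'.add h22')
    (eventually_alternate_sum_eq_zero_of_square_corner_sum_eq_zero (half_pos hr) hsquare)
  rw [deriv_deriv_eq_second_derivative_apply h11 h11',
    deriv_deriv_eq_second_derivative_apply h22 h22']
  simpa only [add_apply] using hmixed
end

section
/- Let g11, g22 : ℝ² → ℝ be twice continuously differentiable on an open rectangle D, and let G(u,v) = diag(g11(u,v), g22(u,v)). Assume that for every center M = (u0, v0) ∈ D and every offset δ = (α, β) with αβ ≠ 0 such that the corresponding closed rectangle lies in D, the energies of the two diagonals are equal: ∫_{-1}^{1} ḋ1(t)ᵀ G(d1(t)) ḋ1(t) dt = ∫_{-1}^{1} ḋ2(t)ᵀ G(d2(t)) ḋ2(t) dt, where d1(t) = M + t(α,β) and d2(t) = M + t(−α,β). Then ∂²g11/∂u∂v = 0 and ∂²g22/∂u∂v = 0 identically on D. -/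
/-!
Fix `p ∈ D` and `(a, b)` with `ab ≠ 0`, and put `Φ = a² g11 + b² g22`. Both diagonals of the
rectangle with center `p` and offset `(xa, xb)` have energy density `x² Φ`, so after rescaling the
hypothesis says `∫_{-x}^{x} Φ(p + t(a, b)) dt = ∫_{-x}^{x} Φ(p + t(-a, b)) dt` for all small `x`.
Differentiating in `x` shows that `φ(t) = Φ(p + t(a, b)) - Φ(p + t(-a, b))` is odd near `0`, so
`φ''(0) = 0`. By symmetry of the Hessian, `φ''(0) = 4ab ∂u∂vΦ(p)`, whence
`a² ∂u∂v g11(p) + b² ∂u∂v g22(p) = 0`; the choices `(a, b) = (1, 1), (1, 2)` give the claim.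
-/

open Filter Topology Set

section Calculus

variable {E G : Type*} [NormedAddCommGroup E] [NormedSpace ℝ E]
  [NormedAddCommGroup G] [NormedSpace ℝ G] {f : E → G} {γ : ℝ → E} {s : E} {t : ℝ}

theorem hasDerivAt_fderiv_apply_comp (hf : ContDiffAt ℝ 2 f (γ t)) (hγ : HasDerivAt γ s t)
    (w : E) :
    HasDerivAt (fun x => fderiv ℝ f (γ x) w) (fderiv ℝ (fderiv ℝ f) (γ t) s w) t := by
  have hf' : DifferentiableAt ℝ (fderiv ℝ f) (γ t) :=
    (hf.fderiv_right (m := 1) (by norm_num)).differentiableAt one_ne_zero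
  simpa using (hf'.hasFDerivAt.comp_hasDerivAt t hγ).clm_apply (hasDerivAt_const t w)

theorem eventually_hasDerivAt_comp (hf : ContDiffAt ℝ 1 f (γ t)) (hγ : ∀ x, HasDerivAt γ s x) :
    ∀ᶠ x in 𝓝 t, HasDerivAt (fun x => f (γ x)) (fderiv ℝ f (γ x) s) x := by
  filter_upwards [(hγ t).continuousAt.tendsto.eventually (hf.eventually (by simp))] with x hx
  exact (hx.differentiableAt one_ne_zero).hasFDerivAt.comp_hasDerivAt x (hγ x)

theorem deriv_deriv_prodMk {f : ℝ × ℝ → G} {p : ℝ × ℝ} (hf : ContDiffAt ℝ 2 f p) :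
    deriv (fun u => deriv (fun v => f (u, v)) p.2) p.1 = fderiv ℝ (fderiv ℝ f) p (1, 0) (0, 1) := by
  have hγ : ∀ u, HasDerivAt (fun u => (u, p.2)) ((1 : ℝ), (0 : ℝ)) u := fun u =>
    (hasDerivAt_id u).prodMk (hasDerivAt_const u p.2)
  refine ((hasDerivAt_fderiv_apply_comp hf (hγ p.1) (0, 1)).congr_of_eventuallyEq ?_).deriv
  filter_upwards [(hγ p.1).continuousAt.tendsto.eventually (hf.eventually (by simp))] with u hu
  exact ((hu.differentiableAt (by norm_num)).hasFDerivAt.comp_hasDerivAt p.2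
    ((hasDerivAt_const p.2 u).prodMk (hasDerivAt_id p.2))).deriv

theorem fderiv_fderiv_const_mul_add {f g : E → ℝ} {p : E} (hf : ContDiffAt ℝ 2 f p)
    (hg : ContDiffAt ℝ 2 g p) (a b : ℝ) (v w : E) :
    fderiv ℝ (fderiv ℝ fun q => a * f q + b * g q) p v w =
      a * fderiv ℝ (fderiv ℝ f) p v w + b * fderiv ℝ (fderiv ℝ g) p v w := by
  have h := fun_iteratedFDeriv_add_apply (i := 2) (hf.const_smul a) (hg.const_smul b)
  rw [iteratedFDeriv_const_smul_apply' hf, iteratedFDeriv_const_smul_apply' hg] at h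
  simpa [iteratedFDeriv_two_apply] using congrArg (fun L => L ![v, w]) h

end Calculus

theorem fderiv_fderiv_sub_reflect {f : ℝ × ℝ → ℝ} {p : ℝ × ℝ} (hf : IsSymmSndFDerivAt ℝ f p)
    (a b : ℝ) :
    fderiv ℝ (fderiv ℝ f) p (a, b) (a, b) - fderiv ℝ (fderiv ℝ f) p (-a, b) (-a, b) =
      4 * a * b * fderiv ℝ (fderiv ℝ f) p (1, 0) (0, 1) := by
  have e : ∀ c : ℝ, ((c, b) : ℝ × ℝ) = c • ((1 : ℝ), (0 : ℝ)) + b • ((0 : ℝ), (1 : ℝ)) := by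
    intro c; simp
  simp only [e, map_add, map_smul, add_apply, smul_apply, smul_eq_mul]
  linear_combination (2 * a * b) * hf (0, 1) (1, 0)

theorem deriv_deriv_eq_zero_of_eventually_odd {φ : ℝ → ℝ} (h : ∀ᶠ x in 𝓝 0, φ (-x) = -φ x) :
    deriv (deriv φ) 0 = 0 := by
  have hφ : φ =ᶠ[𝓝 0] fun x => -φ (-x) := h.mono fun x hx => by simp only [hx, neg_neg]
  have hφ' : deriv φ =ᶠ[𝓝 0] fun x => deriv φ (-x) :=
    hφ.deriv.mono fun x hx => by rw [hx, deriv.fun_neg, deriv_comp_neg, neg_neg]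
  have := hφ'.deriv_eq
  rw [deriv_comp_neg, neg_zero] at this
  linarith

theorem eq_zero_of_eventually_odd {φ φ' : ℝ → ℝ} {c : ℝ} (hodd : ∀ᶠ x in 𝓝 0, φ (-x) = -φ x)
    (hφ : ∀ᶠ x in 𝓝 0, HasDerivAt φ (φ' x) x) (hφ' : HasDerivAt φ' c 0) : c = 0 := by
  have : deriv φ =ᶠ[𝓝 0] φ' := hφ.mono fun x hx => hx.deriv
  rw [← hφ'.deriv, ← this.deriv_eq]
  exact deriv_deriv_eq_zero_of_eventually_odd hodd

theorem hasDerivAt_integral_neg_self {φ : ℝ → ℝ} {r x : ℝ}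
    (hφ : ContinuousOn φ (Metric.ball 0 r)) (hx : x ∈ Metric.ball 0 r) :
    HasDerivAt (fun y => ∫ t in -y..y, φ t) (φ x + φ (-x)) x := by
  have hball : ∀ y ∈ Metric.ball (0 : ℝ) r, -y ∈ Metric.ball (0 : ℝ) r := by simp
  have hint : ∀ y ∈ Metric.ball (0 : ℝ) r, IntervalIntegrable φ MeasureTheory.volume 0 y :=
    fun y hy => (hφ.mono ((convex_iff_ordConnected.1 (convex_ball 0 r)).uIcc_subset
      (Metric.mem_ball_self (Metric.pos_of_mem_ball hy)) hy)).intervalIntegrable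
  have hF : ∀ y ∈ Metric.ball (0 : ℝ) r, HasDerivAt (fun y => ∫ t in 0..y, φ t) (φ y) y :=
    fun y hy => intervalIntegral.integral_hasDerivAt_right (hint y hy)
      (hφ.stronglyMeasurableAtFilter Metric.isOpen_ball y hy)
      (hφ.continuousAt (Metric.isOpen_ball.mem_nhds hy))
  have hJ := (hF x hx).sub ((hF (-x) (hball x hx)).comp x (hasDerivAt_neg x))
  refine (by simpa using hJ : HasDerivAt _ _ x).congr_of_eventuallyEq ?_
  filter_upwards [Metric.isOpen_ball.mem_nhds hx] with y hy
  exact (intervalIntegral.integral_interval_sub_left (hint y hy) (hint (-y) (hball y hy))).symm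

theorem eq_of_integral_neg_self_eq {φ₁ φ₂ φ₁' φ₂' : ℝ → ℝ} {c₁ c₂ : ℝ}
    (h₁ : ∀ᶠ x in 𝓝 0, HasDerivAt φ₁ (φ₁' x) x) (h₂ : ∀ᶠ x in 𝓝 0, HasDerivAt φ₂ (φ₂' x) x)
    (h₁' : HasDerivAt φ₁' c₁ 0) (h₂' : HasDerivAt φ₂' c₂ 0)
    (hint : ∀ᶠ x in 𝓝 0, ∫ t in -x..x, φ₁ t = ∫ t in -x..x, φ₂ t) : c₁ = c₂ := by
  obtain ⟨r, hr0, hr⟩ := Metric.eventually_nhds_iff_ball.1 ((h₁.and h₂).and hint)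
  have hcont₁ : ContinuousOn φ₁ (Metric.ball 0 r) :=
    fun x hx => (hr x hx).1.1.continuousAt.continuousWithinAt
  have hcont₂ : ContinuousOn φ₂ (Metric.ball 0 r) :=
    fun x hx => (hr x hx).1.2.continuousAt.continuousWithinAt
  have hodd : ∀ᶠ x in 𝓝 0, (φ₁ - φ₂) (-x) = -(φ₁ - φ₂) x := by
    refine Metric.eventually_nhds_iff_ball.2 ⟨r, hr0, fun x hx => ?_⟩
    have hJ : φ₁ x + φ₁ (-x) = φ₂ x + φ₂ (-x) := by
      refine ((hasDerivAt_integral_neg_self hcont₁ hx).congr_of_eventuallyEq ?_).unique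
        (hasDerivAt_integral_neg_self hcont₂ hx)
      filter_upwards [Metric.isOpen_ball.mem_nhds hx] with y hy
      exact ((hr y hy).2).symm
    simp only [Pi.sub_apply]
    linarith
  have := eq_zero_of_eventually_odd hodd ((h₁.and h₂).mono fun x hx => hx.1.sub hx.2)
    (h₁'.sub h₂')
  linarith

theorem fderiv_fderiv_eq_zero_of_integral_line_eq {f : ℝ × ℝ → ℝ} {p : ℝ × ℝ}
    (hf : ContDiffAt ℝ 2 f p) {a b : ℝ} (hab : a * b ≠ 0)
    (h : ∀ᶠ x in 𝓝 0, ∫ t in -x..x, f (p + t • (a, b)) = ∫ t in -x..x, f (p + t • (-a, b))) :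
    fderiv ℝ (fderiv ℝ f) p (1, 0) (0, 1) = 0 := by
  have hline : ∀ s : ℝ × ℝ, ∀ t : ℝ, HasDerivAt (fun t : ℝ => p + t • s) s t := fun s t => by
    simpa using ((hasDerivAt_id t).smul_const s).const_add p
  have hf₀ : ∀ s : ℝ × ℝ, ContDiffAt ℝ 2 f ((fun t : ℝ => p + t • s) 0) := by simpa
  have hdiag := eq_of_integral_neg_self_eq
    (eventually_hasDerivAt_comp ((hf₀ (a, b)).of_le one_le_two) (hline (a, b)))
    (eventually_hasDerivAt_comp ((hf₀ (-a, b)).of_le one_le_two) (hline (-a, b)))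
    (hasDerivAt_fderiv_apply_comp (γ := fun t : ℝ => p + t • (a, b)) (hf₀ _) (hline _ 0) _)
    (hasDerivAt_fderiv_apply_comp (γ := fun t : ℝ => p + t • (-a, b)) (hf₀ _) (hline _ 0) _) h
  have hsymm := fderiv_fderiv_sub_reflect (hf.isSymmSndFDerivAt (by simp)) a b
  simp only [zero_smul, add_zero] at hdiag
  rw [hdiag, sub_self, eq_comm] at hsymm
  exact (mul_eq_zero.1 hsymm).resolve_left (by rw [mul_assoc]; exact mul_ne_zero four_ne_zero hab)

theorem eventually_Icc_subset_Ioo {c lo hi : ℝ} (hc : c ∈ Ioo lo hi) (a : ℝ) :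
    ∀ᶠ x in 𝓝 0, Icc (c - |x * a|) (c + |x * a|) ⊆ Ioo lo hi := by
  have hlim : Tendsto (fun x : ℝ => |x * a|) (𝓝 0) (𝓝 0) := by
    simpa using ((continuous_id.mul continuous_const).abs).tendsto (0 : ℝ)
  filter_upwards [hlim.eventually (gt_mem_nhds (sub_pos.2 hc.1)),
    hlim.eventually (gt_mem_nhds (sub_pos.2 hc.2))] with x h₁ h₂
  exact Icc_subset_Ioo (by linarith) (by linarith)

theorem integral_sq_mul_comp_mul (f : ℝ → ℝ) (x : ℝ) :
    ∫ t in (-1 : ℝ)..1, x ^ 2 * f (t * x) = x * ∫ t in -x..x, f t := by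
  rcases eq_or_ne x 0 with rfl | hx
  · simp
  · rw [intervalIntegral.integral_const_mul, intervalIntegral.integral_comp_mul_right f hx,
      smul_eq_mul, neg_one_mul, one_mul]
    field_simp

theorem eventually_integral_neg_self_eq {φ₁ φ₂ : ℝ → ℝ}
    (h : ∀ᶠ x in 𝓝[≠] 0,
      ∫ t in (-1 : ℝ)..1, x ^ 2 * φ₁ (t * x) = ∫ t in (-1 : ℝ)..1, x ^ 2 * φ₂ (t * x)) :
    ∀ᶠ x in 𝓝 0, ∫ t in -x..x, φ₁ t = ∫ t in -x..x, φ₂ t := by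
  filter_upwards [eventually_nhdsWithin_iff.1 h] with x hx
  rcases eq_or_ne x 0 with rfl | hx0
  · simp
  · refine mul_left_cancel₀ hx0 ?_
    rw [← integral_sq_mul_comp_mul, ← integral_sq_mul_comp_mul]
    exact hx hx0

/-- If for a diagonal metric `G = diag(g11, g22)` the two diagonals of every
parameter-line rectangle inside `D` have the same energy, then the mixed
second partial derivatives of `g11` and of `g22` vanish identically on `D`. -/
theorem equal_diagonal_energy_implies_mixed_partials_zero
    (umin umax vmin vmax : ℝ)
    (g11 g22 : ℝ × ℝ → ℝ)
    (hg11 : ContDiffOn ℝ 2 g11 (Set.Ioo umin umax ×ˢ Set.Ioo vmin vmax))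
    (hg22 : ContDiffOn ℝ 2 g22 (Set.Ioo umin umax ×ˢ Set.Ioo vmin vmax))
    (hE : ∀ u0 v0 α β : ℝ, α * β ≠ 0 →
      Set.Icc (u0 - |α|) (u0 + |α|) ⊆ Set.Ioo umin umax →
      Set.Icc (v0 - |β|) (v0 + |β|) ⊆ Set.Ioo vmin vmax →
      (∫ t in (-1:ℝ)..1,
          (α ^ 2 * g11 (u0 + t * α, v0 + t * β) +
           β ^ 2 * g22 (u0 + t * α, v0 + t * β))) =
      (∫ t in (-1:ℝ)..1,
          (α ^ 2 * g11 (u0 - t * α, v0 + t * β) +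
           β ^ 2 * g22 (u0 - t * α, v0 + t * β)))) :
    ∀ p ∈ Set.Ioo umin umax ×ˢ Set.Ioo vmin vmax,
      deriv (fun u => deriv (fun v => g11 (u, v)) p.2) p.1 = 0 ∧
      deriv (fun u => deriv (fun v => g22 (u, v)) p.2) p.1 = 0 := by
  rintro ⟨u0, v0⟩ hp
  have hD : IsOpen (Ioo umin umax ×ˢ Ioo vmin vmax) := isOpen_Ioo.prod isOpen_Ioo
  have h₁ := hg11.contDiffAt (hD.mem_nhds hp)
  have h₂ := hg22.contDiffAt (hD.mem_nhds hp)
  have key : ∀ a b : ℝ, a * b ≠ 0 → a ^ 2 * fderiv ℝ (fderiv ℝ g11) (u0, v0) (1, 0) (0, 1) +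
      b ^ 2 * fderiv ℝ (fderiv ℝ g22) (u0, v0) (1, 0) (0, 1) = 0 := by
    intro a b hab
    rw [← fderiv_fderiv_const_mul_add h₁ h₂]
    refine fderiv_fderiv_eq_zero_of_integral_line_eq
      ((h₁.const_smul (a ^ 2)).add (h₂.const_smul (b ^ 2))) hab (eventually_integral_neg_self_eq ?_)
    filter_upwards [nhdsWithin_le_nhds (eventually_Icc_subset_Ioo hp.1 a),
      nhdsWithin_le_nhds (eventually_Icc_subset_Ioo hp.2 b), self_mem_nhdsWithin] with x hu hv hx
    convert hE u0 v0 (x * a) (x * b)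
      (by rw [mul_mul_mul_comm]; exact mul_ne_zero (mul_ne_zero hx hx) hab) hu hv using 2 <;>
    · ext t
      simp only [Prod.smul_mk, Prod.mk_add_mk, smul_eq_mul]
      ring_nf
  rw [deriv_deriv_prodMk h₁, deriv_deriv_prodMk h₂]
  have h₁₁ := key 1 1 (by norm_num)
  have h₁₂ := key 1 2 (by norm_num)
  constructor <;> linarith
end

section
/- Let g11, g12, g22 : ℝ² → ℝ be twice continuously differentiable on an open rectangle D = I × J, forming the symmetric metric matrix G(u,v) = [[g11, g12],[g12, g22]]. Assume that for every center M ∈ D and every offset δ = (α, β) such that the corresponding closed rectangle lies in D, the energies of the two diagonals are equal: ∫_{-1}^{1} ḋ1(t)ᵀ G(d1(t)) ḋ1(t) dt = ∫_{-1}^{1} ḋ2(t)ᵀ G(d2(t)) ḋ2(t) dt, where d1(t) = M + t(α,β) and d2(t) = M + t(−α,β). Then g12 ≡ 0 on D and there exist functions U1, U2 : I → ℝ and V1, V2 : J → ℝ such that g11(u, v) = U1(u) + V1(v) and g22(u, v) = U2(u) + V2(v) on D; that is, the line element is an orthogonal Liouville line element ds² = (U1(u)+V1(v))du² + (U2(u)+V2(v))dv².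 -/
/-!
Write `S g M δ = ∫_{-1}^{1} g (M + t δ) dt`. The energy of the segment with offset `δ = (α, β)` is
`α² S g11 + 2αβ S g12 + β² S g22`, and reversing the second diagonal turns its offset `(-α, β)`
into `(α, -β)`.

For `α = β = ε` divide the equality of energies by `ε²` and let `ε → 0`: since `S g M 0 = 2 g M`,
this gives `g11 + 2 g12 + g22 = g11 - 2 g12 + g22` at `M`, so `g12 = 0`. Once `g12 = 0`,
differentiate the equality in `β` at `β = 0`: the `β²` term drops out and what remains is
`∫_{-1}^{1} t ∂ᵥg11(u₀ + tα, v) dt = 0` for every admissible `u₀, α`. After the substitution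
`s = u₀ + tα` this says `∫_{u₀-α}^{u₀+α} (s - u₀) ∂ᵥg11(s, v) ds = 0`, and differentiating in `α`
shows that `∂ᵥg11(·, v)` takes the same value at `u₀ - α` and `u₀ + α`. Hence `∂ᵥg11` does not
depend on `u`, i.e. `g11 = U1(u) + V1(v)`. The hypothesis is invariant under exchanging `u` and
`v`, which gives the same conclusion for `g22`.
-/

open MeasureTheory Set Filter Topology Metric

section Segment

variable {E G : Type*} [NormedAddCommGroup E] [NormedSpace ℝ E] [NormedAddCommGroup G]

noncomputable def segmentIntegral [NormedSpace ℝ G] (g : E → G) (M δ : E) : G :=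
  ∫ t in (-1:ℝ)..1, g (M + t • δ)

theorem segmentIntegral_zero [NormedSpace ℝ G] [CompleteSpace G] (g : E → G) (M : E) :
    segmentIntegral g M 0 = (2:ℝ) • g M := by
  simp only [segmentIntegral, smul_zero, add_zero, intervalIntegral.integral_const]
  norm_num

theorem intervalIntegrable_segment {D : Set E} {g : E → G} (hg : ContinuousOn g D) {M δ : E}
    (hseg : ∀ t ∈ Icc (-1:ℝ) 1, M + t • δ ∈ D) :
    IntervalIntegrable (fun t => g (M + t • δ)) volume (-1) 1 := by
  refine ContinuousOn.intervalIntegrable (hg.comp (by fun_prop) ?_)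
  rw [uIcc_of_le (by norm_num)]
  exact hseg

theorem exists_isCompact_subset_forall_segment_mem [ProperSpace E] {D : Set E} (hD : IsOpen D)
    {M δ : E} (hseg : ∀ t ∈ Icc (-1:ℝ) 1, M + t • δ ∈ D) (e : E) :
    ∃ K ⊆ D, IsCompact K ∧ ∃ ρ > 0,
      ∀ s ∈ ball (0:ℝ) ρ, ∀ t ∈ Icc (-1:ℝ) 1, M + t • (δ + s • e) ∈ K := by
  set S := (fun t : ℝ => M + t • δ) '' Icc (-1) 1
  have hS : IsCompact S := isCompact_Icc.image (by fun_prop)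
  obtain ⟨r, hr, hrD⟩ := hS.exists_cthickening_subset_open hD (image_subset_iff.2 hseg)
  refine ⟨cthickening r S, hrD, hS.cthickening, r / (‖e‖ + 1), by positivity, ?_⟩
  intro s hs t ht
  refine mem_cthickening_of_dist_le _ (M + t • δ) _ _ ⟨t, ht, rfl⟩ ?_
  rw [mem_ball_zero_iff, Real.norm_eq_abs] at hs
  have ht' : |t| ≤ 1 := abs_le.2 ht
  calc dist (M + t • (δ + s • e)) (M + t • δ) = |t| * (|s| * ‖e‖) := by
        rw [smul_add, ← add_assoc, dist_self_add_left, norm_smul, norm_smul,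
          Real.norm_eq_abs, Real.norm_eq_abs]
    _ ≤ 1 * (r / (‖e‖ + 1) * (‖e‖ + 1)) := by gcongr; linarith [norm_nonneg e]
    _ = r := by field_simp

theorem hasDerivAt_segmentIntegral [NormedSpace ℝ G] [ProperSpace E] [CompleteSpace G]
    {D : Set E} (hD : IsOpen D) {g : E → G} (hg : ContDiffOn ℝ 1 g D) {M δ : E}
    (hseg : ∀ t ∈ Icc (-1:ℝ) 1, M + t • δ ∈ D) (e : E) :
    HasDerivAt (fun s : ℝ => segmentIntegral g M (δ + s • e))
      (∫ t in (-1:ℝ)..1, t • fderiv ℝ g (M + t • δ) e) 0 := by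
  obtain ⟨K, hKD, hK, ρ, hρ, hmemK⟩ := exists_isCompact_subset_forall_segment_mem hD hseg e
  have hg' : ContinuousOn (fderiv ℝ g) D := hg.continuousOn_fderiv_of_isOpen hD le_rfl
  obtain ⟨C, hC⟩ := hK.exists_bound_of_continuousOn (hg'.mono hKD)
  have hmem s hs t ht : M + t • (δ + s • e) ∈ D := hKD (hmemK s hs t ht)
  have hIoc : uIoc (-1:ℝ) 1 ⊆ Icc (-1) 1 := by
    rw [uIoc_of_le (by norm_num)]
    exact Ioc_subset_Icc_self
  have hF s (hs : s ∈ ball (0:ℝ) ρ) :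
      ContinuousOn (fun t : ℝ => g (M + t • (δ + s • e))) (Icc (-1) 1) :=
    hg.continuousOn.comp (by fun_prop) (hmem s hs)
  have hF' : ContinuousOn (fun t : ℝ => t • fderiv ℝ g (M + t • (δ + (0:ℝ) • e)) e)
      (Icc (-1) 1) :=
    continuousOn_id.smul
      ((hg'.comp (by fun_prop) (hmem 0 (mem_ball_self hρ))).clm_apply continuousOn_const)
  have key := intervalIntegral.hasDerivAt_integral_of_dominated_loc_of_deriv_le
    (F' := fun s t => t • fderiv ℝ g (M + t • (δ + s • e)) e) (bound := fun _ => C * ‖e‖)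
    (ball_mem_nhds 0 hρ)
    (eventually_of_mem (ball_mem_nhds 0 hρ) fun s hs =>
      ((hF s hs).mono hIoc).aestronglyMeasurable measurableSet_uIoc)
    ((hF 0 (mem_ball_self hρ)).intervalIntegrable_of_Icc (by norm_num))
    ((hF'.mono hIoc).aestronglyMeasurable measurableSet_uIoc)
    (ae_of_all _ fun t ht s hs => by
      rw [norm_smul, Real.norm_eq_abs]
      calc |t| * ‖fderiv ℝ g (M + t • (δ + s • e)) e‖ ≤ 1 * (C * ‖e‖) := by
            gcongr
            · exact abs_le.2 (hIoc ht)
            · exact (ContinuousLinearMap.le_opNorm _ _).trans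
                (by gcongr; exact hC _ (hmemK s hs t (hIoc ht)))
        _ = C * ‖e‖ := one_mul _)
    (intervalIntegrable_const (μ := volume))
    (ae_of_all _ fun t ht s hs => by
      have hp := hmem s hs t (hIoc ht)
      have := ((hg.differentiableOn one_ne_zero).differentiableAt
        (hD.mem_nhds hp)).hasFDerivAt.comp_hasDerivAt s
          ((((hasDerivAt_id s).smul_const e).const_add δ).const_smul t |>.const_add M)
      simpa [Function.comp_def] using this)
  simpa only [segmentIntegral, zero_smul, add_zero] using key.2

theorem continuousAt_segmentIntegral_smul [NormedSpace ℝ G] [ProperSpace E] [CompleteSpace G]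
    {D : Set E} (hD : IsOpen D) {g : E → G} (hg : ContDiffOn ℝ 1 g D) {M : E} (hM : M ∈ D)
    (e : E) : ContinuousAt (fun s : ℝ => segmentIntegral g M (s • e)) 0 := by
  simpa only [zero_add] using
    (hasDerivAt_segmentIntegral hD hg (δ := 0) (fun _ _ => by simpa using hM) e).continuousAt

end Segment

theorem eventually_Icc_abs_subset {I : Set ℝ} (hI : IsOpen I) {x : ℝ} (hx : x ∈ I) :
    ∀ᶠ ε in 𝓝 (0:ℝ), Icc (x - |ε|) (x + |ε|) ⊆ I := by
  obtain ⟨r, hr, hrI⟩ := Metric.isOpen_iff.1 hI x hx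
  filter_upwards [ball_mem_nhds (0:ℝ) hr] with ε hε
  rw [← Real.closedBall_eq_Icc]
  exact (closedBall_subset_ball (by simpa using hε)).trans hrI

theorem ContinuousOn.eq_of_moment_eq_zero {I : Set ℝ} (hI : IsOpen I) [I.OrdConnected]
    {h : ℝ → ℝ} (hh : ContinuousOn h I)
    (hmom : ∀ u0 c, c ≠ 0 → Icc (u0 - |c|) (u0 + |c|) ⊆ I →
      ∫ t in (-1:ℝ)..1, t * h (u0 + t * c) = 0)
    {x y : ℝ} (hx : x ∈ I) (hy : y ∈ I) : h x = h y := by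
  wlog hxy : x < y generalizing x y
  · rcases (not_lt.1 hxy).lt_or_eq with hyx | rfl
    · exact (this hy hx hyx).symm
    · rfl
  obtain ⟨u0, c, rfl, rfl, hc⟩ : ∃ u0 c, x = u0 - c ∧ y = u0 + c ∧ 0 < c :=
    ⟨(x + y) / 2, (y - x) / 2, by ring, by ring, by linarith⟩
  set f : ℝ → ℝ := fun s => (s - u0) * h s
  have hf : ContinuousOn f I := (continuousOn_id.sub continuousOn_const).mul hh
  -- `∫_{u0-c'}^{u0+c'} f` is `c' ^ 2` times the moment at `c'`
  have hzero : ∀ᶠ c' in 𝓝 c, ∫ s in (u0 - c')..(u0 + c'), f s = 0 := by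
    filter_upwards [eventually_gt_nhds hc,
      (continuous_const.sub continuous_id).continuousAt.preimage_mem_nhds (hI.mem_nhds hx),
      (continuous_const.add continuous_id).continuousAt.preimage_mem_nhds (hI.mem_nhds hy)]
      with c' hc' hx' hy'
    have hbox : Icc (u0 - |c'|) (u0 + |c'|) ⊆ I := by
      rw [abs_of_pos hc']
      exact (inferInstance : I.OrdConnected).out hx' hy'
    rw [show u0 - c' = c' * (-1) + u0 by ring, show u0 + c' = c' * 1 + u0 by ring,
      ← intervalIntegral.smul_integral_comp_mul_add, smul_eq_mul]
    have hsub : ∫ t in (-1:ℝ)..1, f (c' * t + u0) =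
        c' * ∫ t in (-1:ℝ)..1, t * h (u0 + t * c') := by
      rw [← intervalIntegral.integral_const_mul]
      congr 1 with t
      simp only [f, show c' * t + u0 = u0 + t * c' by ring]
      ring
    rw [hsub, hmom u0 c' hc'.ne' hbox, mul_zero, mul_zero]
  have hderiv : HasDerivAt (fun c' => ∫ s in (u0 - c')..(u0 + c'), f s)
      (f (u0 + c) + f (u0 - c)) c := by
    have hFTC := intervalIntegral.integral_hasFDerivAt
      ((hf.mono (Set.OrdConnected.uIcc_subset inferInstance hx hy)).intervalIntegrable)
      (hf.stronglyMeasurableAtFilter hI _ hx) (hf.stronglyMeasurableAtFilter hI _ hy)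
      (hf.continuousAt (hI.mem_nhds hx)) (hf.continuousAt (hI.mem_nhds hy))
    have := hFTC.comp_hasDerivAt c
      (((hasDerivAt_id c).const_sub u0).prodMk ((hasDerivAt_id c).const_add u0))
    simpa [Function.comp_def] using this
  have h0 := hderiv.unique ((hasDerivAt_const c (0:ℝ)).congr_of_eventuallyEq hzero)
  simp only [f, add_sub_cancel_left, sub_sub_cancel_left] at h0
  have : c * (h (u0 - c) - h (u0 + c)) = 0 := by linear_combination -h0
  exact sub_eq_zero.1 ((mul_eq_zero.1 this).resolve_left hc.ne')

theorem exists_eq_add_of_hasDerivAt_snd {I J : Set ℝ} (hJ : IsOpen J) (hJc : IsPreconnected J)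
    {f f' : ℝ × ℝ → ℝ} (hf : ∀ u ∈ I, ∀ v ∈ J, HasDerivAt (fun w => f (u, w)) (f' (u, v)) v)
    (hf' : ∀ v ∈ J, ∀ x ∈ I, ∀ y ∈ I, f' (x, v) = f' (y, v)) :
    ∃ U V : ℝ → ℝ, ∀ u ∈ I, ∀ v ∈ J, f (u, v) = U u + V v := by
  rcases I.eq_empty_or_nonempty with rfl | ⟨u1, hu1⟩
  · exact ⟨0, 0, by simp⟩
  have hdiff : ∀ u ∈ I, DifferentiableOn ℝ (fun w => f (u, w)) J :=
    fun u hu v hv => (hf u hu v hv).differentiableAt.differentiableWithinAt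
  choose! U hU using fun u hu => hJ.exists_eq_add_of_deriv_eq hJc (hdiff u hu) (hdiff u1 hu1)
    fun v hv => by rw [(hf u hu v hv).deriv, (hf u1 hu1 v hv).deriv, hf' v hv u hu u1 hu1]
  exact ⟨U, fun v => f (u1, v), fun u hu v hv => (hU u hu hv).trans (add_comm _ _)⟩

noncomputable def segmentEnergy (g11 g12 g22 : ℝ × ℝ → ℝ) (M δ : ℝ × ℝ) : ℝ :=
  ∫ t in (-1:ℝ)..1, (δ.1 ^ 2 * g11 (M + t • δ) + 2 * δ.1 * δ.2 * g12 (M + t • δ) +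
    δ.2 ^ 2 * g22 (M + t • δ))

section Energy

variable {g11 g12 g22 : ℝ × ℝ → ℝ}

theorem segmentEnergy_neg (M δ : ℝ × ℝ) :
    segmentEnergy g11 g12 g22 M (-δ) = segmentEnergy g11 g12 g22 M δ := by
  have hrev (f : ℝ → ℝ) : ∫ t in (-1:ℝ)..1, f (-t) = ∫ t in (-1:ℝ)..1, f t :=
    (intervalIntegral.integral_comp_neg f).trans (by norm_num)
  unfold segmentEnergy
  conv_rhs => rw [← hrev]
  congr 1 with t
  simp only [Prod.fst_neg, Prod.snd_neg, smul_neg, neg_smul]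
  ring

theorem segmentEnergy_swap (M δ : ℝ × ℝ) :
    segmentEnergy (g22 ∘ Prod.swap) (g12 ∘ Prod.swap) (g11 ∘ Prod.swap) M.swap δ.swap =
      segmentEnergy g11 g12 g22 M δ := by
  obtain ⟨u, v⟩ := M
  obtain ⟨a, b⟩ := δ
  simp only [segmentEnergy, Function.comp_apply, Prod.swap_prod_mk, Prod.smul_mk,
    Prod.mk_add_mk]
  congr 1 with t
  ring

theorem segmentEnergy_eq {D : Set (ℝ × ℝ)} (h11 : ContinuousOn g11 D)
    (h12 : ContinuousOn g12 D) (h22 : ContinuousOn g22 D) {M δ : ℝ × ℝ}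
    (hseg : ∀ t ∈ Icc (-1:ℝ) 1, M + t • δ ∈ D) :
    segmentEnergy g11 g12 g22 M δ = δ.1 ^ 2 * segmentIntegral g11 M δ +
      2 * δ.1 * δ.2 * segmentIntegral g12 M δ + δ.2 ^ 2 * segmentIntegral g22 M δ := by
  have i11 := intervalIntegrable_segment h11 hseg
  have i12 := intervalIntegrable_segment h12 hseg
  have i22 := intervalIntegrable_segment h22 hseg
  rw [segmentEnergy, intervalIntegral.integral_add ((i11.const_mul _).add (i12.const_mul _))
    (i22.const_mul _), intervalIntegral.integral_add (i11.const_mul _) (i12.const_mul _)]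
  simp only [intervalIntegral.integral_const_mul, segmentIntegral]

end Energy

theorem segment_mem_prod {I J : Set ℝ} {u0 v0 α β t : ℝ}
    (hα : Icc (u0 - |α|) (u0 + |α|) ⊆ I) (hβ : Icc (v0 - |β|) (v0 + |β|) ⊆ J)
    (ht : t ∈ Icc (-1:ℝ) 1) : (u0, v0) + t • (α, β) ∈ I ×ˢ J := by
  have key (x c : ℝ) : x + t * c ∈ Icc (x - |c|) (x + |c|) := by
    have := abs_le.1 ((abs_mul t c).trans_le
      (mul_le_of_le_one_left (abs_nonneg c) (abs_le.2 ht)))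
    exact ⟨by linarith, by linarith⟩
  exact ⟨hα (key u0 α), hβ (key v0 β)⟩

def DiagonalEnergiesAgree (I J : Set ℝ) (g11 g12 g22 : ℝ × ℝ → ℝ) : Prop :=
  ∀ u0 v0 α β : ℝ, Icc (u0 - |α|) (u0 + |α|) ⊆ I → Icc (v0 - |β|) (v0 + |β|) ⊆ J →
    segmentEnergy g11 g12 g22 (u0, v0) (α, β) = segmentEnergy g11 g12 g22 (u0, v0) (-α, β)

namespace DiagonalEnergiesAgree

variable {I J : Set ℝ} {g11 g12 g22 : ℝ × ℝ → ℝ}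

theorem swap (h : DiagonalEnergiesAgree I J g11 g12 g22) :
    DiagonalEnergiesAgree J I (g22 ∘ Prod.swap) (g12 ∘ Prod.swap) (g11 ∘ Prod.swap) := by
  intro v0 u0 β α hβ hα
  have e1 := segmentEnergy_swap (g11 := g11) (g12 := g12) (g22 := g22) (u0, v0) (α, β)
  have e2 := segmentEnergy_swap (g11 := g11) (g12 := g12) (g22 := g22) (u0, v0) (-α, β)
  simp only [Prod.swap_prod_mk] at e1 e2
  rw [← segmentEnergy_neg _ (-β, α), Prod.neg_mk, neg_neg, e1, e2]
  exact h u0 v0 α β hα hβ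

theorem g12_eq_zero (hP : DiagonalEnergiesAgree I J g11 g12 g22)
    (hI : IsOpen I) (hJ : IsOpen J) (h11 : ContDiffOn ℝ 1 g11 (I ×ˢ J))
    (h12 : ContDiffOn ℝ 1 g12 (I ×ˢ J)) (h22 : ContDiffOn ℝ 1 g22 (I ×ˢ J)) :
    ∀ p ∈ I ×ˢ J, g12 p = 0 := by
  rintro ⟨u0, v0⟩ hM
  -- `Φ e ε` is `ε⁻²` times the energy of the segment with offset `ε • e`
  let Φ (e : ℝ × ℝ) (ε : ℝ) : ℝ := e.1 ^ 2 * segmentIntegral g11 (u0, v0) (ε • e) +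
    2 * e.1 * e.2 * segmentIntegral g12 (u0, v0) (ε • e) +
    e.2 ^ 2 * segmentIntegral g22 (u0, v0) (ε • e)
  have hΦ (e : ℝ × ℝ) : ContinuousAt (Φ e) 0 := by
    have hc {g : ℝ × ℝ → ℝ} (hg : ContDiffOn ℝ 1 g (I ×ˢ J)) :=
      continuousAt_segmentIntegral_smul (hI.prod hJ) hg hM e
    exact (((hc h11).const_mul _).add ((hc h12).const_mul _)).add ((hc h22).const_mul _)
  have heq : Φ (1, 1) =ᶠ[𝓝[≠] 0] Φ (-1, 1) := by
    filter_upwards [nhdsWithin_le_nhds (eventually_Icc_abs_subset hI hM.1),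
      nhdsWithin_le_nhds (eventually_Icc_abs_subset hJ hM.2), self_mem_nhdsWithin]
      with ε hεI hεJ hε
    have hεI' : Icc (u0 - |-ε|) (u0 + |-ε|) ⊆ I := by rwa [abs_neg]
    have h := hP u0 v0 ε ε hεI hεJ
    rw [segmentEnergy_eq h11.continuousOn h12.continuousOn h22.continuousOn
        (fun t ht => segment_mem_prod hεI hεJ ht),
      segmentEnergy_eq h11.continuousOn h12.continuousOn h22.continuousOn
        (fun t ht => segment_mem_prod hεI' hεJ ht),
      show ((ε, ε) : ℝ × ℝ) = ε • (1, 1) by simp,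
      show ((-ε, ε) : ℝ × ℝ) = ε • (-1, 1) by simp] at h
    have : ε ^ 2 * (Φ (1, 1) ε - Φ (-1, 1) ε) = 0 := by
      simp only [Φ, Prod.smul_fst, Prod.smul_snd, smul_eq_mul] at h ⊢
      linear_combination h
    exact sub_eq_zero.1 ((mul_eq_zero.1 this).resolve_left (pow_ne_zero 2 hε))
  have h0 : Φ (1, 1) 0 = Φ (-1, 1) 0 :=
    tendsto_nhds_unique ((hΦ _).tendsto.mono_left nhdsWithin_le_nhds)
      (((hΦ _).tendsto.mono_left nhdsWithin_le_nhds).congr' heq.symm)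
  simp only [Φ, zero_smul, segmentIntegral_zero, smul_eq_mul] at h0
  linarith

theorem balance_of_g12_eq_zero (hP : DiagonalEnergiesAgree I J g11 g12 g22)
    (h11 : ContinuousOn g11 (I ×ˢ J)) (h12 : ∀ p ∈ I ×ˢ J, g12 p = 0)
    (h22 : ContinuousOn g22 (I ×ˢ J)) {u0 v0 α β : ℝ} (hα : Icc (u0 - |α|) (u0 + |α|) ⊆ I)
    (hβ : Icc (v0 - |β|) (v0 + |β|) ⊆ J) :
    α ^ 2 * (segmentIntegral g11 (u0, v0) (α, β) - segmentIntegral g11 (u0, v0) (α, -β)) +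
      β ^ 2 * (segmentIntegral g22 (u0, v0) (α, β) - segmentIntegral g22 (u0, v0) (α, -β))
      = 0 := by
  have hβ' : Icc (v0 - |-β|) (v0 + |-β|) ⊆ J := by rwa [abs_neg]
  have hS12 {δ : ℝ × ℝ} (hseg : ∀ t ∈ Icc (-1:ℝ) 1, (u0, v0) + t • δ ∈ I ×ˢ J) :
      segmentIntegral g12 (u0, v0) δ = 0 := by
    rw [segmentIntegral, intervalIntegral.integral_congr (g := fun _ => 0),
      intervalIntegral.integral_zero]
    intro t ht
    rw [uIcc_of_le (by norm_num)] at ht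
    exact h12 _ (hseg t ht)
  have c12 : ContinuousOn g12 (I ×ˢ J) := continuousOn_const.congr h12
  have h := hP u0 v0 α β hα hβ
  rw [← segmentEnergy_neg (u0, v0) (-α, β), Prod.neg_mk, neg_neg,
    segmentEnergy_eq h11 c12 h22 (fun t ht => segment_mem_prod hα hβ ht),
    segmentEnergy_eq h11 c12 h22 (fun t ht => segment_mem_prod hα hβ' ht),
    hS12 (fun t ht => segment_mem_prod hα hβ ht),
    hS12 (fun t ht => segment_mem_prod hα hβ' ht)] at h
  linear_combination h

theorem fderiv_g11_apply_zero_one_eq (hP : DiagonalEnergiesAgree I J g11 g12 g22)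
    (hI : IsOpen I) [I.OrdConnected] (hJ : IsOpen J) (h11 : ContDiffOn ℝ 1 g11 (I ×ˢ J))
    (h12 : ∀ p ∈ I ×ˢ J, g12 p = 0) (h22 : ContDiffOn ℝ 1 g22 (I ×ˢ J)) {v : ℝ} (hv : v ∈ J)
    {x y : ℝ} (hx : x ∈ I) (hy : y ∈ I) :
    fderiv ℝ g11 (x, v) (0, 1) = fderiv ℝ g11 (y, v) (0, 1) := by
  have hD : IsOpen (I ×ˢ J) := hI.prod hJ
  refine ContinuousOn.eq_of_moment_eq_zero (h := fun u => fderiv ℝ g11 (u, v) (0, 1)) hI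
    ?_ (fun u0 α hα0 hα => ?_) hx hy
  · exact ((h11.continuousOn_fderiv_of_isOpen hD le_rfl).clm_apply continuousOn_const).comp
      (by fun_prop) fun u hu => ⟨hu, hv⟩
  have hseg (t) (ht : t ∈ Icc (-1:ℝ) 1) : (u0, v) + t • (α, 0) ∈ I ×ˢ J :=
    segment_mem_prod hα (by simpa using hv) ht
  let Φ (β : ℝ) : ℝ :=
    α ^ 2 * (segmentIntegral g11 (u0, v) ((α, 0) + β • (0, 1)) -
      segmentIntegral g11 (u0, v) ((α, 0) + β • (0, -1))) +
    β ^ 2 * (segmentIntegral g22 (u0, v) ((α, 0) + β • (0, 1)) -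
      segmentIntegral g22 (u0, v) ((α, 0) + β • (0, -1)))
  have hΦ0 : Φ =ᶠ[𝓝 0] fun _ => 0 := by
    filter_upwards [eventually_Icc_abs_subset hJ hv] with β hβ
    simpa [Φ] using hP.balance_of_g12_eq_zero h11.continuousOn h12 h22.continuousOn hα hβ
  have hd {g : ℝ × ℝ → ℝ} (hg : ContDiffOn ℝ 1 g (I ×ˢ J)) (e : ℝ × ℝ) :=
    hasDerivAt_segmentIntegral hD hg hseg e
  have hΦ : HasDerivAt Φ
      (α ^ 2 * (2 * ∫ t in (-1:ℝ)..1, t * fderiv ℝ g11 (u0 + t * α, v) (0, 1))) 0 := by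
    refine ((((hd h11 (0, 1)).sub (hd h11 (0, -1))).const_mul (α ^ 2)).add
      ((hasDerivAt_pow 2 (0:ℝ)).mul ((hd h22 (0, 1)).sub (hd h22 (0, -1))))).congr_deriv ?_
    rw [show ((0:ℝ), (-1:ℝ)) = -(0, 1) by simp]
    simp only [map_neg, smul_eq_mul, mul_neg, intervalIntegral.integral_neg, Prod.smul_mk,
      mul_zero, Prod.mk_add_mk, add_zero]
    generalize (∫ t in (-1:ℝ)..1, t * fderiv ℝ g11 (u0 + t * α, v) (0, 1)) = m
    simp only [Nat.add_one_sub_one, pow_one, mul_zero, zero_mul, ne_eq, OfNat.ofNat_ne_zero,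
      not_false_eq_true, zero_pow, add_zero]
    ring
  have h0 := hΦ.unique ((hasDerivAt_const (0:ℝ) (0:ℝ)).congr_of_eventuallyEq hΦ0)
  simpa [hα0] using h0

theorem exists_g11_eq_add (hP : DiagonalEnergiesAgree I J g11 g12 g22) (hI : IsOpen I)
    [I.OrdConnected] (hJ : IsOpen J) [J.OrdConnected] (h11 : ContDiffOn ℝ 1 g11 (I ×ˢ J))
    (h12 : ∀ p ∈ I ×ˢ J, g12 p = 0) (h22 : ContDiffOn ℝ 1 g22 (I ×ˢ J)) :
    ∃ U V : ℝ → ℝ, ∀ u ∈ I, ∀ v ∈ J, g11 (u, v) = U u + V v :=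
  exists_eq_add_of_hasDerivAt_snd hJ (Set.OrdConnected.isPreconnected ‹_›)
    (f' := fun p => fderiv ℝ g11 p (0, 1))
    (fun u hu v hv => ((h11.differentiableOn one_ne_zero).differentiableAt
      ((hI.prod hJ).mem_nhds ⟨hu, hv⟩)).hasFDerivAt.comp_hasDerivAt v
        ((hasDerivAt_const v u).prodMk (hasDerivAt_id v)))
    (fun _ hv _ hx _ hy => hP.fderiv_g11_apply_zero_one_eq hI hJ h11 h12 h22 hv hx hy)

end DiagonalEnergiesAgree

/-- If the two diagonals of every parameter-line rectangle inside
`D = I × J` have the same energy for the metric `G = [[g11,g12],[g12,g22]]`,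
then the line element is an orthogonal Liouville line element:
`g12 ≡ 0`, `g11(u,v) = U1(u) + V1(v)` and `g22(u,v) = U2(u) + V2(v)` on `D`. -/
theorem equal_diagonal_energy_implies_liouville
    (umin umax vmin vmax : ℝ)
    (g11 g12 g22 : ℝ × ℝ → ℝ)
    (hg11 : ContDiffOn ℝ 2 g11 (Set.Ioo umin umax ×ˢ Set.Ioo vmin vmax))
    (hg12 : ContDiffOn ℝ 2 g12 (Set.Ioo umin umax ×ˢ Set.Ioo vmin vmax))
    (hg22 : ContDiffOn ℝ 2 g22 (Set.Ioo umin umax ×ˢ Set.Ioo vmin vmax))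
    (hE : ∀ u0 v0 α β : ℝ,
      Set.Icc (u0 - |α|) (u0 + |α|) ⊆ Set.Ioo umin umax →
      Set.Icc (v0 - |β|) (v0 + |β|) ⊆ Set.Ioo vmin vmax →
      (∫ t in (-1:ℝ)..1,
          (α ^ 2 * g11 (u0 + t * α, v0 + t * β) +
           2 * α * β * g12 (u0 + t * α, v0 + t * β) +
           β ^ 2 * g22 (u0 + t * α, v0 + t * β))) =
      (∫ t in (-1:ℝ)..1,
          (α ^ 2 * g11 (u0 - t * α, v0 + t * β) -
           2 * α * β * g12 (u0 - t * α, v0 + t * β) +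
           β ^ 2 * g22 (u0 - t * α, v0 + t * β)))) :
    (∀ p ∈ Set.Ioo umin umax ×ˢ Set.Ioo vmin vmax, g12 p = 0) ∧
    ∃ U1 U2 V1 V2 : ℝ → ℝ, ∀ u ∈ Set.Ioo umin umax, ∀ v ∈ Set.Ioo vmin vmax,
      g11 (u, v) = U1 u + V1 v ∧ g22 (u, v) = U2 u + V2 v := by
  have hP : DiagonalEnergiesAgree (Ioo umin umax) (Ioo vmin vmax) g11 g12 g22 :=
    fun u0 v0 α β hα hβ => (hE u0 v0 α β hα hβ).trans <| intervalIntegral.integral_congr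
      fun t _ => by
        simp only [Prod.smul_mk, smul_eq_mul, Prod.mk_add_mk, mul_neg, ← sub_eq_add_neg]
        ring
  have hswap {g : ℝ × ℝ → ℝ} (hg : ContDiffOn ℝ 2 g (Ioo umin umax ×ˢ Ioo vmin vmax)) :
      ContDiffOn ℝ 1 (g ∘ Prod.swap) (Ioo vmin vmax ×ˢ Ioo umin umax) :=
    (hg.of_le one_le_two).comp (contDiff_snd.prodMk contDiff_fst).contDiffOn
      fun p hp => ⟨hp.2, hp.1⟩
  have h12 := hP.g12_eq_zero isOpen_Ioo isOpen_Ioo (hg11.of_le one_le_two)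
    (hg12.of_le one_le_two) (hg22.of_le one_le_two)
  obtain ⟨U1, V1, h11⟩ := hP.exists_g11_eq_add isOpen_Ioo isOpen_Ioo (hg11.of_le one_le_two)
    h12 (hg22.of_le one_le_two)
  obtain ⟨V2, U2, h22⟩ := hP.swap.exists_g11_eq_add isOpen_Ioo isOpen_Ioo (hswap hg22)
    (fun p hp => h12 p.swap ⟨hp.2, hp.1⟩) (hswap hg11)
  exact ⟨h12, U1, U2, V1, V2,
    fun u hu v hv => ⟨h11 u hu v hv, (h22 v hv u hu).trans (add_comm _ _)⟩⟩
end

section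
/- Let g11, g12, g22 : ℝ² → ℝ be twice continuously differentiable on an open rectangle D = I × J, forming the symmetric metric matrix G(u,v) = [[g11, g12],[g12, g22]]. Then the following are equivalent: (i) for every center M ∈ D and every offset δ = (α, β) such that the corresponding closed rectangle lies in D, the energies ∫_{-1}^{1} ḋ1(t)ᵀ G(d1(t)) ḋ1(t) dt and ∫_{-1}^{1} ḋ2(t)ᵀ G(d2(t)) ḋ2(t) dt of the two diagonals d1(t) = M + t(α,β), d2(t) = M + t(−α,β) are equal; (ii) g12 ≡ 0 on D and there exist U1, U2 : I → ℝ, V1, V2 : J → ℝ with g11(u,v) = U1(u) + V1(v) and g22(u,v) = U2(u) + V2(v), i.e. the line element is an orthogonal Liouville line element ds² = (U1(u)+V1(v))du² + (U2(u)+V2(v))dv². -/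
/-!
The difference of the two energies is `α² A(g₁₁) + 2αβ B(g₁₂) + β² A(g₂₂)`, where
`A(f) = ∫₋₁¹ (f(d₁ t) - f(d₂ t)) dt` and `B(g) = ∫₋₁¹ (g(d₁ t) + g(d₂ t)) dt`.
Up to a function that is odd in `t`, `f(d₁ t) - f(d₂ t)` is the second difference of `f` over a
rectangle with sides `2tα` and `tβ`, so the mean value theorem gives
`A(f) = (4/3) αβ ∂ᵤ∂ᵥf(M) + o(αβ)`, while `B(g) → 4 g(M)`. Equal energies on the squares
`α = β = ε → 0` therefore force `g₁₂(M) = 0`; then, on the rectangles `(α, β) = (aε, bε)`,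
they force `a² ∂ᵤ∂ᵥg₁₁(M) + b² ∂ᵤ∂ᵥg₂₂(M) = 0` for all `a, b`. So both mixed partials vanish,
and on a rectangle this means that `g₁₁` and `g₂₂` split as `U(u) + V(v)`. Conversely, for a
Liouville metric the integrands of the `A` terms are odd in `t` and `B(g₁₂) = 0`.
-/

open Set Filter Topology MeasureTheory

namespace DiagonalEnergy

noncomputable def partialU (f : ℝ × ℝ → ℝ) (q : ℝ × ℝ) : ℝ := fderiv ℝ f q (1, 0)

noncomputable def partialV (f : ℝ × ℝ → ℝ) (q : ℝ × ℝ) : ℝ := fderiv ℝ f q (0, 1)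

def rect (u0 v0 α β : ℝ) : Set (ℝ × ℝ) :=
  Icc (u0 - |α|) (u0 + |α|) ×ˢ Icc (v0 - |β|) (v0 + |β|)

noncomputable def diagDiff (f : ℝ × ℝ → ℝ) (u0 v0 α β : ℝ) : ℝ :=
  ∫ t in (-1:ℝ)..1, (f (u0 + t * α, v0 + t * β) - f (u0 - t * α, v0 + t * β))

noncomputable def diagSum (f : ℝ × ℝ → ℝ) (u0 v0 α β : ℝ) : ℝ :=
  ∫ t in (-1:ℝ)..1, (f (u0 + t * α, v0 + t * β) + f (u0 - t * α, v0 + t * β))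

section Calculus

variable {f g : ℝ × ℝ → ℝ} {D : Set (ℝ × ℝ)} {x y : ℝ}

lemma hasDerivAt_partialU (hg : DifferentiableAt ℝ g (x, y)) :
    HasDerivAt (fun s => g (s, y)) (partialU g (x, y)) x :=
  hg.hasFDerivAt.comp_hasDerivAt x ((hasDerivAt_id x).prodMk (hasDerivAt_const x y))

lemma hasDerivAt_partialV (hg : DifferentiableAt ℝ g (x, y)) :
    HasDerivAt (fun w => g (x, w)) (partialV g (x, y)) y :=
  hg.hasFDerivAt.comp_hasDerivAt y ((hasDerivAt_const y x).prodMk (hasDerivAt_id y))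

lemma contDiffOn_partialU {m n : WithTop ℕ∞} (hD : IsOpen D) (hf : ContDiffOn ℝ n f D)
    (hmn : m + 1 ≤ n) : ContDiffOn ℝ m (partialU f) D :=
  (hf.fderiv_of_isOpen hD hmn).clm_apply contDiffOn_const

lemma contDiffOn_partialV {m n : WithTop ℕ∞} (hD : IsOpen D) (hf : ContDiffOn ℝ n f D)
    (hmn : m + 1 ≤ n) : ContDiffOn ℝ m (partialV f) D :=
  (hf.fderiv_of_isOpen hD hmn).clm_apply contDiffOn_const

lemma abs_sub_le_of_hasDerivAt {φ φ' : ℝ → ℝ} {a b C : ℝ}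
    (hφ : ∀ x ∈ uIcc a b, HasDerivAt φ (φ' x) x) (hC : ∀ x ∈ uIcc a b, |φ' x| ≤ C) :
    |φ b - φ a| ≤ C * |b - a| :=
  (convex_uIcc a b).norm_image_sub_le_of_norm_hasDerivWithin_le
    (fun x hx => (hφ x hx).hasDerivWithinAt) hC left_mem_uIcc right_mem_uIcc

end Calculus

lemma integral_eq_zero_of_odd {h : ℝ → ℝ} (a : ℝ) (hodd : ∀ t, h (-t) = -h t) :
    ∫ t in (-a)..a, h t = 0 := by
  have := intervalIntegral.integral_comp_neg (a := -a) (b := a) h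
  simp only [hodd, intervalIntegral.integral_neg, neg_neg] at this
  linarith

lemma integral_sub_comp_reflect_eq_zero (k : ℝ → ℝ) (u0 α a : ℝ) :
    ∫ t in (-a)..a, (k (u0 + t * α) - k (u0 - t * α)) = 0 :=
  integral_eq_zero_of_odd a fun t => by
    simp only [neg_mul, sub_neg_eq_add, ← sub_eq_add_neg, neg_sub]

section Rect

variable {u0 v0 α β s σ t : ℝ}

lemma mem_rect_iff {x y : ℝ} : (x, y) ∈ rect u0 v0 α β ↔ |u0 - x| ≤ |α| ∧ |v0 - y| ≤ |β| := by
  simp only [rect, mem_prod, mem_Icc_iff_abs_le]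

lemma add_mem_rect (hs : |s| ≤ |α|) (hσ : |σ| ≤ |β|) : (u0 + s, v0 + σ) ∈ rect u0 v0 α β := by
  simpa [mem_rect_iff] using ⟨hs, hσ⟩

lemma sub_mem_rect (hs : |s| ≤ |α|) (hσ : |σ| ≤ |β|) : (u0 - s, v0 + σ) ∈ rect u0 v0 α β := by
  simpa [mem_rect_iff] using ⟨hs, hσ⟩

lemma center_mem_rect : (u0, v0) ∈ rect u0 v0 α β :=
  mem_rect_iff.2 ⟨by simp, by simp⟩

lemma rect_subset_rect (hs : |s| ≤ |α|) (hσ : |σ| ≤ |β|) : rect u0 v0 s σ ⊆ rect u0 v0 α β :=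
  prod_mono (Icc_subset_Icc (by linarith) (by linarith))
    (Icc_subset_Icc (by linarith) (by linarith))

lemma abs_sub_le_of_mem_uIcc_sub_add {x c r : ℝ} (hx : x ∈ uIcc (c - r) (c + r)) :
    |c - x| ≤ |r| := by
  rcases mem_uIcc.1 hx with ⟨h₁, h₂⟩ | ⟨h₁, h₂⟩ <;>
    exact abs_le.2 ⟨by linarith [le_abs_self r, neg_abs_le r],
      by linarith [le_abs_self r, neg_abs_le r]⟩

lemma abs_mul_le_of_mem_uIcc (ht : t ∈ uIcc (-1:ℝ) 1) : |t * α| ≤ |α| := by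
  rw [uIcc_of_le (by norm_num)] at ht
  rw [abs_mul]
  exact mul_le_of_le_one_left (abs_nonneg α) (abs_le.2 ht)

lemma eventually_Icc_subset {I : Set ℝ} {x : ℝ} (hI : I ∈ 𝓝 x) (a : ℝ) :
    ∀ᶠ ε in 𝓝 0, Icc (x - |a * ε|) (x + |a * ε|) ⊆ I := by
  have : Tendsto (fun ε : ℝ => |a * ε|) (𝓝 0) (𝓝 0) := by
    simpa using ((continuous_const.mul continuous_id).abs.tendsto (0:ℝ))
  simpa only [Real.closedBall_eq_Icc] using this.eventually (eventually_closedBall_subset hI)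

lemma eventually_rect_subset {U : Set (ℝ × ℝ)} (hU : U ∈ 𝓝 (u0, v0)) (a b : ℝ) :
    ∀ᶠ ε in 𝓝 0, rect u0 v0 (a * ε) (b * ε) ⊆ U := by
  obtain ⟨I, hI, J, hJ, hIJ⟩ := mem_nhds_prod_iff.1 hU
  filter_upwards [eventually_Icc_subset hI a, eventually_Icc_subset hJ b] with ε hε₁ hε₂
  exact (prod_mono hε₁ hε₂).trans hIJ

end Rect

section Diagonals

variable {f g g₁₁ g₁₂ g₂₂ : ℝ × ℝ → ℝ} {D : Set (ℝ × ℝ)} {u0 v0 α β s σ M e : ℝ}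

lemma intervalIntegrable_diagonals (hg : ContinuousOn g (rect u0 v0 α β)) :
    IntervalIntegrable (fun t => g (u0 + t * α, v0 + t * β)) volume (-1) 1 ∧
      IntervalIntegrable (fun t => g (u0 - t * α, v0 + t * β)) volume (-1) 1 :=
  ⟨(hg.comp (by fun_prop) fun _ ht => add_mem_rect (abs_mul_le_of_mem_uIcc ht)
      (abs_mul_le_of_mem_uIcc ht)).intervalIntegrable,
    (hg.comp (by fun_prop) fun _ ht => sub_mem_rect (abs_mul_le_of_mem_uIcc ht)
      (abs_mul_le_of_mem_uIcc ht)).intervalIntegrable⟩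

lemma diagSum_eq_zero (hg : ∀ q ∈ rect u0 v0 α β, g q = 0) : diagSum g u0 v0 α β = 0 := by
  rw [diagSum, ← intervalIntegral.integral_zero]
  refine intervalIntegral.integral_congr fun t ht => ?_
  simp only [hg _ (add_mem_rect (abs_mul_le_of_mem_uIcc ht) (abs_mul_le_of_mem_uIcc ht)),
    hg _ (sub_mem_rect (abs_mul_le_of_mem_uIcc ht) (abs_mul_le_of_mem_uIcc ht)), add_zero]

lemma diagDiff_eq_zero_of_eq_add {U V : ℝ → ℝ}
    (hf : ∀ q ∈ rect u0 v0 α β, f q = U q.1 + V q.2) : diagDiff f u0 v0 α β = 0 := by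
  rw [diagDiff, intervalIntegral.integral_congr (g := fun t => U (u0 + t * α) - U (u0 - t * α))
    fun t ht => by
      simp only [hf _ (add_mem_rect (abs_mul_le_of_mem_uIcc ht) (abs_mul_le_of_mem_uIcc ht)),
        hf _ (sub_mem_rect (abs_mul_le_of_mem_uIcc ht) (abs_mul_le_of_mem_uIcc ht))]
      ring]
  exact integral_sub_comp_reflect_eq_zero U u0 α 1

lemma abs_secondDiff_sub_le (hf : ∀ q ∈ rect u0 v0 s σ, DifferentiableAt ℝ f q)
    (hfv : ∀ q ∈ rect u0 v0 s σ, DifferentiableAt ℝ (partialV f) q)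
    (hM : ∀ q ∈ rect u0 v0 s σ, |partialU (partialV f) q - M| ≤ e) :
    |f (u0 + s, v0 + σ) - f (u0 - s, v0 + σ) - (f (u0 + s, v0) - f (u0 - s, v0))
      - 2 * s * σ * M| ≤ 2 * |s| * |σ| * e := by
  have hmem : ∀ x ∈ uIcc (u0 - s) (u0 + s), ∀ y ∈ uIcc v0 (v0 + σ),
      (x, y) ∈ rect u0 v0 s σ := fun x hx y hy =>
    mem_rect_iff.2 ⟨abs_sub_le_of_mem_uIcc_sub_add hx,
      by simpa [abs_sub_comm] using abs_sub_left_of_mem_uIcc hy⟩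
  have hinner : ∀ y ∈ uIcc v0 (v0 + σ),
      |partialV f (u0 + s, y) - partialV f (u0 - s, y) - 2 * s * M| ≤ 2 * |s| * e := by
    intro y hy
    have := abs_sub_le_of_hasDerivAt (φ := fun x => partialV f (x, y) - M * x)
      (fun x hx => (hasDerivAt_partialU (hfv _ (hmem x hx y hy))).sub
        ((hasDerivAt_id x).const_mul M) |>.congr_deriv (by simp))
      (fun x hx => hM _ (hmem x hx y hy))
    calc _ = |partialV f (u0 + s, y) - M * (u0 + s) - (partialV f (u0 - s, y) - M * (u0 - s))| := by
          congr 1; ring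
      _ ≤ e * |u0 + s - (u0 - s)| := this
      _ = 2 * |s| * e := by
          rw [show u0 + s - (u0 - s) = 2 * s by ring, abs_mul, abs_two]; ring
  have := abs_sub_le_of_hasDerivAt (φ := fun y => f (u0 + s, y) - f (u0 - s, y) - 2 * s * M * y)
    (fun y hy => ((hasDerivAt_partialV (hf _ (hmem _ right_mem_uIcc y hy))).sub
      (hasDerivAt_partialV (hf _ (hmem _ left_mem_uIcc y hy)))).sub
      ((hasDerivAt_id y).const_mul (2 * s * M)) |>.congr_deriv (by simp)) hinner
  calc _ = |f (u0 + s, v0 + σ) - f (u0 - s, v0 + σ) - 2 * s * M * (v0 + σ)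
        - (f (u0 + s, v0) - f (u0 - s, v0) - 2 * s * M * v0)| := by congr 1; ring
    _ ≤ 2 * |s| * e * |v0 + σ - v0| := this
    _ = 2 * |s| * |σ| * e := by rw [add_sub_cancel_left]; ring

lemma abs_diagonal_secondDiff_sub_le (hf : ∀ q ∈ rect u0 v0 α β, DifferentiableAt ℝ f q)
    (hfv : ∀ q ∈ rect u0 v0 α β, DifferentiableAt ℝ (partialV f) q)
    (hM : ∀ q ∈ rect u0 v0 α β, |partialU (partialV f) q - M| ≤ e) {t : ℝ}
    (ht : t ∈ uIcc (-1:ℝ) 1) :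
    |f (u0 + t * α, v0 + t * β) - f (u0 - t * α, v0 + t * β)
      - (f (u0 + t * α, v0) - f (u0 - t * α, v0)) - 2 * t ^ 2 * α * β * M|
      ≤ 2 * |α| * |β| * e := by
  have hs := abs_mul_le_of_mem_uIcc (α := α) ht
  have hσ := abs_mul_le_of_mem_uIcc (α := β) ht
  have hR := rect_subset_rect (u0 := u0) (v0 := v0) hs hσ
  have he : 0 ≤ e := (abs_nonneg _).trans (hM _ center_mem_rect)
  calc _ ≤ 2 * |t * α| * |t * β| * e := by
        simpa [mul_assoc, mul_left_comm, pow_two] using abs_secondDiff_sub_le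
          (fun q hq => hf q (hR hq)) (fun q hq => hfv q (hR hq)) (fun q hq => hM q (hR hq))
    _ ≤ 2 * |α| * |β| * e := by gcongr

lemma abs_diagDiff_sub_le (hf : ∀ q ∈ rect u0 v0 α β, DifferentiableAt ℝ f q)
    (hfv : ∀ q ∈ rect u0 v0 α β, DifferentiableAt ℝ (partialV f) q)
    (hM : ∀ q ∈ rect u0 v0 α β, |partialU (partialV f) q - M| ≤ e) :
    |diagDiff f u0 v0 α β - 4 / 3 * α * β * M| ≤ 4 * |α| * |β| * e := by
  have hc : ContinuousOn f (rect u0 v0 α β) :=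
    continuousOn_of_forall_continuousAt fun q hq => (hf q hq).continuousAt
  have hdiag := intervalIntegrable_diagonals hc
  have hline := intervalIntegrable_diagonals (hc.mono (rect_subset_rect (σ := 0) le_rfl (by simp)))
  simp only [mul_zero, add_zero] at hline
  have hodd : ∫ t in (-1:ℝ)..1, (f (u0 + t * α, v0) - f (u0 - t * α, v0)) = 0 :=
    integral_sub_comp_reflect_eq_zero (fun x => f (x, v0)) u0 α 1
  have hquad : ∫ t in (-1:ℝ)..1, 2 * t ^ 2 * α * β * M = 4 / 3 * α * β * M := by
    simp only [intervalIntegral.integral_mul_const, intervalIntegral.integral_const_mul,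
      integral_pow]
    norm_num
  have hsplit : diagDiff f u0 v0 α β - 4 / 3 * α * β * M = ∫ t in (-1:ℝ)..1,
      (f (u0 + t * α, v0 + t * β) - f (u0 - t * α, v0 + t * β)
        - (f (u0 + t * α, v0) - f (u0 - t * α, v0)) - 2 * t ^ 2 * α * β * M) := by
    rw [intervalIntegral.integral_sub ((hdiag.1.sub hdiag.2).sub (hline.1.sub hline.2))
        (Continuous.intervalIntegrable (by fun_prop) _ _),
      intervalIntegral.integral_sub (hdiag.1.sub hdiag.2) (hline.1.sub hline.2), hodd, hquad,
      sub_zero, diagDiff]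
  rw [hsplit, ← Real.norm_eq_abs]
  calc _ ≤ 2 * |α| * |β| * e * |1 - (-1:ℝ)| :=
        intervalIntegral.norm_integral_le_of_norm_le_const fun t ht =>
          abs_diagonal_secondDiff_sub_le hf hfv hM (uIoc_subset_uIcc ht)
    _ = 4 * |α| * |β| * e := by norm_num; ring

lemma abs_diagSum_sub_le (hg : ContinuousOn g (rect u0 v0 α β))
    (he : ∀ q ∈ rect u0 v0 α β, |g q - g (u0, v0)| ≤ e) :
    |diagSum g u0 v0 α β - 4 * g (u0, v0)| ≤ 4 * e := by
  have hint := intervalIntegrable_diagonals hg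
  have hsplit : diagSum g u0 v0 α β - 4 * g (u0, v0) = ∫ t in (-1:ℝ)..1,
      ((g (u0 + t * α, v0 + t * β) - g (u0, v0)) + (g (u0 - t * α, v0 + t * β) - g (u0, v0))) := by
    have : ∫ t in (-1:ℝ)..1, ((g (u0 + t * α, v0 + t * β) - g (u0, v0))
        + (g (u0 - t * α, v0 + t * β) - g (u0, v0)))
        = diagSum g u0 v0 α β - ∫ _ in (-1:ℝ)..1, 2 * g (u0, v0) := by
      rw [diagSum, ← intervalIntegral.integral_sub (hint.1.add hint.2) intervalIntegrable_const]
      congr 1; ext t; ring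
    rw [this, intervalIntegral.integral_const, smul_eq_mul]
    ring
  rw [hsplit, ← Real.norm_eq_abs]
  calc _ ≤ 2 * e * |1 - (-1:ℝ)| := by
        refine intervalIntegral.norm_integral_le_of_norm_le_const fun t ht => ?_
        have ht : t ∈ uIcc (-1:ℝ) 1 := uIoc_subset_uIcc ht
        refine (abs_add_le _ _).trans ?_
        linarith [he _ (add_mem_rect (abs_mul_le_of_mem_uIcc ht) (abs_mul_le_of_mem_uIcc ht)),
          he _ (sub_mem_rect (abs_mul_le_of_mem_uIcc ht) (abs_mul_le_of_mem_uIcc ht))]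
    _ = 4 * e := by norm_num; ring

noncomputable def diagEnergyGap (g₁₁ g₁₂ g₂₂ : ℝ × ℝ → ℝ) (u0 v0 α β : ℝ) : ℝ :=
  α ^ 2 * diagDiff g₁₁ u0 v0 α β + 2 * α * β * diagSum g₁₂ u0 v0 α β
    + β ^ 2 * diagDiff g₂₂ u0 v0 α β

lemma energy_sub_energy_eq (hR : rect u0 v0 α β ⊆ D) (h₁₁ : ContinuousOn g₁₁ D)
    (h₁₂ : ContinuousOn g₁₂ D) (h₂₂ : ContinuousOn g₂₂ D) :
    (∫ t in (-1:ℝ)..1,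
        (α ^ 2 * g₁₁ (u0 + t * α, v0 + t * β) + 2 * α * β * g₁₂ (u0 + t * α, v0 + t * β)
          + β ^ 2 * g₂₂ (u0 + t * α, v0 + t * β)))
      - (∫ t in (-1:ℝ)..1,
        (α ^ 2 * g₁₁ (u0 - t * α, v0 + t * β) - 2 * α * β * g₁₂ (u0 - t * α, v0 + t * β)
          + β ^ 2 * g₂₂ (u0 - t * α, v0 + t * β)))
      = diagEnergyGap g₁₁ g₁₂ g₂₂ u0 v0 α β := by
  obtain ⟨i₁₁, j₁₁⟩ := intervalIntegrable_diagonals (h₁₁.mono hR)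
  obtain ⟨i₁₂, j₁₂⟩ := intervalIntegrable_diagonals (h₁₂.mono hR)
  obtain ⟨i₂₂, j₂₂⟩ := intervalIntegrable_diagonals (h₂₂.mono hR)
  rw [← intervalIntegral.integral_sub (((i₁₁.const_mul _).add (i₁₂.const_mul _)).add
      (i₂₂.const_mul _)) (((j₁₁.const_mul _).sub (j₁₂.const_mul _)).add (j₂₂.const_mul _)),
    diagEnergyGap, diagDiff, diagSum, diagDiff, ← intervalIntegral.integral_const_mul,
    ← intervalIntegral.integral_const_mul, ← intervalIntegral.integral_const_mul,
    ← intervalIntegral.integral_add (((i₁₁.sub j₁₁).const_mul _))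
      ((i₁₂.add j₁₂).const_mul _),
    ← intervalIntegral.integral_add (((i₁₁.sub j₁₁).const_mul _).add
      ((i₁₂.add j₁₂).const_mul _)) ((i₂₂.sub j₂₂).const_mul _)]
  congr 1; ext t; ring

end Diagonals

section Limits

variable {f g g₁₁ g₁₂ g₂₂ : ℝ × ℝ → ℝ} {D : Set (ℝ × ℝ)} {u0 v0 : ℝ}

lemma tendsto_diagSum (hg : ContinuousOn g D) (hD : D ∈ 𝓝 (u0, v0)) (a b : ℝ) :
    Tendsto (fun ε => diagSum g u0 v0 (a * ε) (b * ε)) (𝓝 0) (𝓝 (4 * g (u0, v0))) := by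
  refine Metric.tendsto_nhds.2 fun e he => ?_
  have hnear : ∀ᶠ q in 𝓝 (u0, v0), q ∈ D ∧ dist (g q) (g (u0, v0)) < e / 8 :=
    Filter.inter_mem hD (Metric.tendsto_nhds.1 (hg.continuousAt hD) _ (by positivity))
  filter_upwards [eventually_rect_subset hnear a b] with ε hε
  rw [Real.dist_eq]
  calc _ ≤ 4 * (e / 8) := abs_diagSum_sub_le (hg.mono fun q hq => (hε hq).1)
        fun q hq => (hε hq).2.le
    _ < e := by linarith

lemma tendsto_diagDiff_div_sq (hD : IsOpen D) (hf : ContDiffOn ℝ 2 f D) (hp : (u0, v0) ∈ D)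
    (a b : ℝ) :
    Tendsto (fun ε => diagDiff f u0 v0 (a * ε) (b * ε) / ε ^ 2) (𝓝[≠] (0:ℝ))
      (𝓝 (4 / 3 * a * b * partialU (partialV f) (u0, v0))) := by
  set M := partialU (partialV f) (u0, v0)
  have hfv := contDiffOn_partialV (m := 1) hD hf (by norm_num)
  have hM : ContinuousAt (partialU (partialV f)) (u0, v0) :=
    (contDiffOn_partialU (m := 0) hD hfv (by norm_num)).continuousOn.continuousAt
      (hD.mem_nhds hp)
  refine Metric.tendsto_nhds.2 fun e he => ?_
  set e' := e / (4 * |a| * |b| + 1)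
  have hnear : ∀ᶠ q in 𝓝 (u0, v0), q ∈ D ∧ dist (partialU (partialV f) q) M < e' :=
    Filter.inter_mem (hD.mem_nhds hp) (Metric.tendsto_nhds.1 hM _ (by positivity))
  filter_upwards [nhdsWithin_le_nhds (eventually_rect_subset hnear a b), self_mem_nhdsWithin]
    with ε hε (hε₀ : ε ≠ 0)
  have hbound := abs_diagDiff_sub_le
    (fun q hq => (hf.differentiableOn (by norm_num) q (hε hq).1).differentiableAt
      (hD.mem_nhds (hε hq).1))
    (fun q hq => (hfv.differentiableOn (by norm_num) q (hε hq).1).differentiableAt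
      (hD.mem_nhds (hε hq).1))
    (fun q hq => (hε hq).2.le)
  have hε₂ : 0 < ε ^ 2 := by positivity
  rw [Real.dist_eq]
  calc |diagDiff f u0 v0 (a * ε) (b * ε) / ε ^ 2 - 4 / 3 * a * b * M|
      = |diagDiff f u0 v0 (a * ε) (b * ε) - 4 / 3 * (a * ε) * (b * ε) * M| / ε ^ 2 := by
        rw [← abs_of_pos hε₂, ← abs_div, abs_of_pos hε₂]
        congr 1
        field_simp
    _ ≤ 4 * |a * ε| * |b * ε| * e' / ε ^ 2 := by gcongr
    _ = 4 * |a| * |b| * e' := by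
        rw [abs_mul, abs_mul, ← sq_abs ε]
        field_simp
    _ < e := by
        rw [mul_div_assoc', div_lt_iff₀ (by positivity)]
        nlinarith

lemma tendsto_diagDiff (hD : IsOpen D) (hf : ContDiffOn ℝ 2 f D) (hp : (u0, v0) ∈ D) :
    Tendsto (fun ε => diagDiff f u0 v0 ε ε) (𝓝[≠] 0) (𝓝 0) := by
  have hsq : Tendsto (fun ε : ℝ => ε ^ 2) (𝓝[≠] 0) (𝓝 0) :=
    tendsto_nhdsWithin_of_tendsto_nhds (by simpa using (continuous_pow 2).tendsto (0:ℝ))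
  have := (tendsto_diagDiff_div_sq hD hf hp 1 1).mul hsq
  simp only [one_mul, mul_zero] at this
  refine this.congr' ?_
  filter_upwards [self_mem_nhdsWithin] with ε (hε : ε ≠ 0)
  field_simp

lemma eq_zero_of_diagEnergyGap_eq_zero (hD : IsOpen D) (hp : (u0, v0) ∈ D)
    (h₁₁ : ContDiffOn ℝ 2 g₁₁ D) (h₁₂ : ContinuousOn g₁₂ D) (h₂₂ : ContDiffOn ℝ 2 g₂₂ D)
    (h : ∀ᶠ ε in 𝓝 0, diagEnergyGap g₁₁ g₁₂ g₂₂ u0 v0 ε ε = 0) : g₁₂ (u0, v0) = 0 := by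
  have hT := ((tendsto_diagDiff hD h₁₁ hp).add
    (((tendsto_diagSum h₁₂ (hD.mem_nhds hp) 1 1).mono_left nhdsWithin_le_nhds).const_mul 2)).add
    (tendsto_diagDiff hD h₂₂ hp)
  simp only [one_mul] at hT
  have h0 : ∀ᶠ ε in 𝓝[≠] 0,
      diagDiff g₁₁ u0 v0 ε ε + 2 * diagSum g₁₂ u0 v0 ε ε + diagDiff g₂₂ u0 v0 ε ε = 0 := by
    filter_upwards [nhdsWithin_le_nhds h, self_mem_nhdsWithin] with ε hε (hε₀ : ε ≠ 0)
    rw [diagEnergyGap] at hε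
    have : ε ^ 2 * (diagDiff g₁₁ u0 v0 ε ε + 2 * diagSum g₁₂ u0 v0 ε ε
      + diagDiff g₂₂ u0 v0 ε ε) = 0 := by linear_combination hε
    simpa [hε₀] using this
  have := tendsto_nhds_unique hT (tendsto_const_nhds.congr' (h0.mono fun _ h => h.symm))
  linarith

lemma partialU_partialV_eq_zero_of_diagEnergyGap_eq_zero (hD : IsOpen D) (hp : (u0, v0) ∈ D)
    (h₁₁ : ContDiffOn ℝ 2 g₁₁ D) (h₂₂ : ContDiffOn ℝ 2 g₂₂ D)
    (h₁₂ : ∀ᶠ q in 𝓝 (u0, v0), g₁₂ q = 0)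
    (h : ∀ a b : ℝ, ∀ᶠ ε in 𝓝 0, diagEnergyGap g₁₁ g₁₂ g₂₂ u0 v0 (a * ε) (b * ε) = 0) :
    partialU (partialV g₁₁) (u0, v0) = 0 ∧ partialU (partialV g₂₂) (u0, v0) = 0 := by
  set M₁ := partialU (partialV g₁₁) (u0, v0)
  set M₂ := partialU (partialV g₂₂) (u0, v0)
  have key : ∀ a b : ℝ, 4 / 3 * a * b * (a ^ 2 * M₁ + b ^ 2 * M₂) = 0 := by
    intro a b
    have hT := ((tendsto_diagDiff_div_sq hD h₁₁ hp a b).const_mul (a ^ 2)).add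
      ((tendsto_diagDiff_div_sq hD h₂₂ hp a b).const_mul (b ^ 2))
    have h0 : ∀ᶠ ε in 𝓝[≠] 0, a ^ 2 * (diagDiff g₁₁ u0 v0 (a * ε) (b * ε) / ε ^ 2)
        + b ^ 2 * (diagDiff g₂₂ u0 v0 (a * ε) (b * ε) / ε ^ 2) = 0 := by
      filter_upwards [nhdsWithin_le_nhds (h a b),
        nhdsWithin_le_nhds (eventually_rect_subset h₁₂ a b), self_mem_nhdsWithin]
        with ε hε hε₁₂ (hε₀ : ε ≠ 0)
      rw [diagEnergyGap, diagSum_eq_zero hε₁₂] at hε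
      set A₁ := diagDiff g₁₁ u0 v0 (a * ε) (b * ε)
      set A₂ := diagDiff g₂₂ u0 v0 (a * ε) (b * ε)
      have : ε ^ 2 * (a ^ 2 * A₁ + b ^ 2 * A₂) = 0 := by linear_combination hε
      calc _ = (a ^ 2 * A₁ + b ^ 2 * A₂) / ε ^ 2 := by ring
        _ = 0 := by rw [(by simpa [hε₀] using this : a ^ 2 * A₁ + b ^ 2 * A₂ = 0), zero_div]
    have := tendsto_nhds_unique hT (tendsto_const_nhds.congr' (h0.mono fun _ h => h.symm))
    linear_combination this
  have h₁ := key 1 1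
  have h₂ := key 2 1
  constructor <;> linarith

end Limits

lemma exists_eq_add_of_partialU_partialV_eq_zero {f : ℝ × ℝ → ℝ} {I J : Set ℝ}
    (hI : IsOpen I) (hI' : IsPreconnected I) (hJ : IsOpen J) (hJ' : IsPreconnected J)
    (hf : ContDiffOn ℝ 2 f (I ×ˢ J)) (h : ∀ q ∈ I ×ˢ J, partialU (partialV f) q = 0) :
    ∃ U V : ℝ → ℝ, ∀ u ∈ I, ∀ v ∈ J, f (u, v) = U u + V v := by
  rcases I.eq_empty_or_nonempty with rfl | ⟨u₁, hu₁⟩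
  · exact ⟨0, 0, by simp⟩
  rcases J.eq_empty_or_nonempty with rfl | ⟨v₁, hv₁⟩
  · exact ⟨0, 0, fun _ _ => by simp⟩
  have hD := hI.prod hJ
  have hdiff : ∀ q ∈ I ×ˢ J, DifferentiableAt ℝ f q := fun q hq =>
    (hf.differentiableOn (by norm_num) q hq).differentiableAt (hD.mem_nhds hq)
  have hdiffv : ∀ q ∈ I ×ˢ J, DifferentiableAt ℝ (partialV f) q := fun q hq =>
    ((contDiffOn_partialV (m := 1) hD hf (by norm_num)).differentiableOn (by norm_num) q
      hq).differentiableAt (hD.mem_nhds hq)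
  have hv : ∀ u ∈ I, ∀ w ∈ J, partialV f (u, w) = partialV f (u₁, w) := fun u hu w hw =>
    hI.is_const_of_deriv_eq_zero (f := fun s => partialV f (s, w)) hI'
      (fun s hs =>
        (hasDerivAt_partialU (hdiffv _ ⟨hs, hw⟩)).differentiableAt.differentiableWithinAt)
      (fun s hs => (hasDerivAt_partialU (hdiffv _ ⟨hs, hw⟩)).deriv.trans (h _ ⟨hs, hw⟩)) hu hu₁
  refine ⟨fun u => f (u, v₁) - f (u₁, v₁), fun v => f (u₁, v), fun u hu v hv' => ?_⟩
  have hderiv : ∀ w ∈ J, HasDerivAt (fun w => f (u, w) - f (u₁, w)) 0 w := fun w hw =>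
    ((hasDerivAt_partialV (hdiff _ ⟨hu, hw⟩)).sub
      (hasDerivAt_partialV (hdiff _ ⟨hu₁, hw⟩))).congr_deriv (by rw [hv u hu w hw, sub_self])
  have := hJ.is_const_of_deriv_eq_zero (f := fun w => f (u, w) - f (u₁, w)) hJ'
    (fun w hw => (hderiv w hw).differentiableAt.differentiableWithinAt)
    (fun w hw => (hderiv w hw).deriv) hv' hv₁
  linarith

end DiagonalEnergy

open DiagonalEnergy

/-- Main theorem: the two diagonals of every parameter-line rectangle inside
`D = I × J` have the same energy for the metric `G = [[g11,g12],[g12,g22]]`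
if and only if the line element is an orthogonal Liouville line element
`ds² = (U1(u)+V1(v))du² + (U2(u)+V2(v))dv²`. -/
theorem equal_diagonal_energy_iff_liouville
    (umin umax vmin vmax : ℝ)
    (g11 g12 g22 : ℝ × ℝ → ℝ)
    (hg11 : ContDiffOn ℝ 2 g11 (Set.Ioo umin umax ×ˢ Set.Ioo vmin vmax))
    (hg12 : ContDiffOn ℝ 2 g12 (Set.Ioo umin umax ×ˢ Set.Ioo vmin vmax))
    (hg22 : ContDiffOn ℝ 2 g22 (Set.Ioo umin umax ×ˢ Set.Ioo vmin vmax)) :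
    (∀ u0 v0 α β : ℝ,
      Set.Icc (u0 - |α|) (u0 + |α|) ⊆ Set.Ioo umin umax →
      Set.Icc (v0 - |β|) (v0 + |β|) ⊆ Set.Ioo vmin vmax →
      (∫ t in (-1:ℝ)..1,
          (α ^ 2 * g11 (u0 + t * α, v0 + t * β) +
           2 * α * β * g12 (u0 + t * α, v0 + t * β) +
           β ^ 2 * g22 (u0 + t * α, v0 + t * β))) =
      (∫ t in (-1:ℝ)..1,
          (α ^ 2 * g11 (u0 - t * α, v0 + t * β) -
           2 * α * β * g12 (u0 - t * α, v0 + t * β) +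
           β ^ 2 * g22 (u0 - t * α, v0 + t * β)))) ↔
    ((∀ p ∈ Set.Ioo umin umax ×ˢ Set.Ioo vmin vmax, g12 p = 0) ∧
     ∃ U1 U2 V1 V2 : ℝ → ℝ, ∀ u ∈ Set.Ioo umin umax, ∀ v ∈ Set.Ioo vmin vmax,
       g11 (u, v) = U1 u + V1 v ∧ g22 (u, v) = U2 u + V2 v) := by
  set D := Ioo umin umax ×ˢ Ioo vmin vmax
  have hD : IsOpen D := isOpen_Ioo.prod isOpen_Ioo
  constructor
  · intro h
    have hzero : ∀ p ∈ D, ∀ a b : ℝ,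
        ∀ᶠ ε in 𝓝 0, diagEnergyGap g11 g12 g22 p.1 p.2 (a * ε) (b * ε) = 0 := by
      rintro ⟨u0, v0⟩ ⟨hu, hv⟩ a b
      filter_upwards [eventually_Icc_subset (isOpen_Ioo.mem_nhds hu) a,
        eventually_Icc_subset (isOpen_Ioo.mem_nhds hv) b] with ε hU hV
      rw [← energy_sub_energy_eq (prod_mono hU hV) hg11.continuousOn hg12.continuousOn
        hg22.continuousOn, h u0 v0 _ _ hU hV, sub_self]
    have h12 : ∀ p ∈ D, g12 p = 0 := fun p hp =>
      eq_zero_of_diagEnergyGap_eq_zero hD hp hg11 hg12.continuousOn hg22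
        (by simpa using hzero p hp 1 1)
    have hmixed : ∀ p ∈ D,
        partialU (partialV g11) p = 0 ∧ partialU (partialV g22) p = 0 := fun p hp =>
      partialU_partialV_eq_zero_of_diagEnergyGap_eq_zero hD hp hg11 hg22
        (eventually_of_mem (hD.mem_nhds hp) h12) (hzero p hp)
    obtain ⟨U1, V1, h11⟩ := exists_eq_add_of_partialU_partialV_eq_zero isOpen_Ioo
      isPreconnected_Ioo isOpen_Ioo isPreconnected_Ioo hg11 fun p hp => (hmixed p hp).1
    obtain ⟨U2, V2, h22⟩ := exists_eq_add_of_partialU_partialV_eq_zero isOpen_Ioo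
      isPreconnected_Ioo isOpen_Ioo isPreconnected_Ioo hg22 fun p hp => (hmixed p hp).2
    exact ⟨h12, U1, U2, V1, V2, fun u hu v hv => ⟨h11 u hu v hv, h22 u hu v hv⟩⟩
  · rintro ⟨h12, U1, U2, V1, V2, hUV⟩ u0 v0 α β hU hV
    have hR : rect u0 v0 α β ⊆ D := prod_mono hU hV
    rw [← sub_eq_zero, energy_sub_energy_eq hR hg11.continuousOn hg12.continuousOn
      hg22.continuousOn, diagEnergyGap,
      diagDiff_eq_zero_of_eq_add fun q hq => (hUV q.1 (hR hq).1 q.2 (hR hq).2).1,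
      diagDiff_eq_zero_of_eq_add fun q hq => (hUV q.1 (hR hq).1 q.2 (hR hq).2).2,
      diagSum_eq_zero fun q hq => h12 q (hR hq)]
    ring
end

section
/- Let n ≥ 1 and let U : Fin n → Fin n → (ℝ → ℝ) be a family of continuous functions, defining the diagonal n-dimensional orthogonal Liouville metric g_kk(u) = Σ_{i} U i k (u_i) (and g_jk = 0 for j ≠ k) on an open box D ⊂ ℝⁿ. Let M ∈ ℝⁿ be a center and δ ∈ ℝⁿ an offset such that the closed box with center M and half-sides |δ_k| is contained in D. For each sign vector ε ∈ {−1, +1}ⁿ, let d_ε(t) = M + t·(ε ∘ δ) (componentwise product), t ∈ [−1, 1], be the corresponding diagonal of the box, with energy E(ε) = ∫_{-1}^{1} Σ_k (ε_k δ_k)² · (Σ_i U i k (M_i + t ε_i δ_i)) dt. Then E(ε) is the same for all sign vectors ε; i.e., all diagonals of the n-rectangle have the same energy. -/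
set_option maxHeartbeats 1000000

lemma liouville_aux
    (n : ℕ)
    (U : Fin n → Fin n → ℝ → ℝ)
    (lo hi : Fin n → ℝ)
    (hU : ∀ i k, ContinuousOn (U i k) (Set.Ioo (lo i) (hi i)))
    (M δ : Fin n → ℝ)
    (hbox : ∀ i, Set.Icc (M i - |δ i|) (M i + |δ i|) ⊆ Set.Ioo (lo i) (hi i))
    (ε : Fin n → ℝ)
    (hε : ∀ i, ε i = 1 ∨ ε i = -1) :
    (∫ t in (-1:ℝ)..1,
        ∑ k, (ε k * δ k) ^ 2 * (∑ i, U i k (M i + t * (ε i * δ i)))) =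
    ∑ k, ∑ i, (δ k) ^ 2 * (∫ t in (-1:ℝ)..1, U i k (M i + t * δ i)) := by
  have habs : ∀ (e : ℝ), e = 1 ∨ e = -1 → |e| = 1 := by
    rintro e (rfl | rfl) <;> simp
  have hmap : ∀ i (e : ℝ), e = 1 ∨ e = -1 →
      ∀ t ∈ Set.uIcc (-1:ℝ) 1, M i + t * (e * δ i) ∈ Set.Ioo (lo i) (hi i) := by
    intro i e he t ht
    apply hbox i
    rw [Set.uIcc_of_le (by norm_num)] at ht
    have h1 : |t * (e * δ i)| ≤ |δ i| := by
      rw [abs_mul, abs_mul, habs e he, one_mul]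
      have : |t| ≤ 1 := abs_le.mpr ⟨ht.1, ht.2⟩
      calc |t| * |δ i| ≤ 1 * |δ i| := by
            exact mul_le_mul_of_nonneg_right this (abs_nonneg _)
        _ = |δ i| := one_mul _
    rw [abs_le] at h1
    constructor <;> linarith [h1.1, h1.2]
  have hcontOn : ∀ i k (e : ℝ), e = 1 ∨ e = -1 →
      ContinuousOn (fun t => U i k (M i + t * (e * δ i))) (Set.uIcc (-1:ℝ) 1) := by
    intro i k e he
    apply (hU i k).comp
    · exact (continuous_const.add (continuous_id.mul continuous_const)).continuousOn
    · exact hmap i e he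
  have hcont : ∀ i k (e : ℝ), e = 1 ∨ e = -1 →
      IntervalIntegrable (fun t => U i k (M i + t * (e * δ i)))
        MeasureTheory.volume (-1) 1 := fun i k e he =>
    (hcontOn i k e he).intervalIntegrable
  rw [intervalIntegral.integral_finset_sum]
  · apply Finset.sum_congr rfl
    intro k _
    rw [intervalIntegral.integral_const_mul,
      intervalIntegral.integral_finset_sum (fun i _ => hcont i k (ε i) (hε i)),
      Finset.mul_sum]
    have hεk2 : (ε k * δ k) ^ 2 = (δ k) ^ 2 := by
      rcases hε k with h | h <;> rw [h] <;> ring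
    rw [hεk2]
    apply Finset.sum_congr rfl
    intro i _
    congr 1
    rcases hε i with h | h
    · simp [h]
    · rw [h]
      have : (fun t => U i k (M i + t * (-1 * δ i)))
          = fun t => U i k (M i + (-t) * δ i) := by
        funext t; ring_nf
      rw [this]
      have := intervalIntegral.integral_comp_neg
        (a := (-1:ℝ)) (b := 1) (fun t => U i k (M i + t * δ i))
      simpa using this
  · intro k _
    apply ContinuousOn.intervalIntegrable
    exact continuousOn_const.mul (continuousOn_finset_sum _ fun i _ => hcontOn i k (ε i) (hε i))

/-- Main theorem in dimension `n`: for the `n`-dimensional orthogonal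
Liouville metric `g_kk(u) = Σ_i U i k (u_i)` on an open box, all the main
diagonals of an `n`-rectangle contained in the box have the same energy. -/
theorem liouville_diagonals_equal_energy_ndim
    (n : ℕ) (hn : 1 ≤ n)
    (U : Fin n → Fin n → ℝ → ℝ)
    (lo hi : Fin n → ℝ)
    (hU : ∀ i k, ContinuousOn (U i k) (Set.Ioo (lo i) (hi i)))
    (M δ : Fin n → ℝ)
    (hbox : ∀ i, Set.Icc (M i - |δ i|) (M i + |δ i|) ⊆ Set.Ioo (lo i) (hi i))
    (ε ε' : Fin n → ℝ)
    (hε : ∀ i, ε i = 1 ∨ ε i = -1)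
    (hε' : ∀ i, ε' i = 1 ∨ ε' i = -1) :
    (∫ t in (-1:ℝ)..1,
        ∑ k, (ε k * δ k) ^ 2 * (∑ i, U i k (M i + t * (ε i * δ i)))) =
    (∫ t in (-1:ℝ)..1,
        ∑ k, (ε' k * δ k) ^ 2 * (∑ i, U i k (M i + t * (ε' i * δ i)))) := by
  rw [liouville_aux n U lo hi hU M δ hbox ε hε,
      liouville_aux n U lo hi hU M δ hbox ε' hε']
end

section
/- Consider the plane parabolic-coordinate map x(u, v) = (u² − v², 2uv) from ℝ² to ℝ². Fix a center M = (u0, v0) and offset δ = (α, β), and let d1(t) = M + t(α, β), d2(t) = M + t(−α, β), t ∈ [−1, 1], be the two diagonals of the parameter rectangle. For every k ∈ ℕ, k ≥ 1, the discrete energies of the two image polygons are equal: Σ_{j=1}^{k} |x(d1(−1 + 2j/k)) − x(d1(−1 + 2(j−1)/k))|² / (2/k) = Σ_{j=1}^{k} |x(d2(−1 + 2j/k)) − x(d2(−1 + 2(j−1)/k))|² / (2/k). -/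
/-- For the plane parabolic-coordinate map `x(u,v) = (u² − v², 2uv)` the
discrete energies (for any uniform partition into `k` pieces) of the two
diagonals of a parameter rectangle are equal. -/
theorem parabolic_map_discrete_energies_equal
    (u0 v0 α β : ℝ) (k : ℕ) (hk : 1 ≤ k) :
    let x : ℝ × ℝ → ℝ × ℝ := fun p => (p.1 ^ 2 - p.2 ^ 2, 2 * p.1 * p.2)
    let d1 : ℝ → ℝ × ℝ := fun t => (u0 + t * α, v0 + t * β)
    let d2 : ℝ → ℝ × ℝ := fun t => (u0 - t * α, v0 + t * β)
    (∑ j ∈ Finset.range k,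
      (((x (d1 (-1 + 2 * ((j : ℝ) + 1) / k))).1 - (x (d1 (-1 + 2 * (j : ℝ) / k))).1) ^ 2 +
       ((x (d1 (-1 + 2 * ((j : ℝ) + 1) / k))).2 - (x (d1 (-1 + 2 * (j : ℝ) / k))).2) ^ 2)
        / (2 / (k : ℝ))) =
    (∑ j ∈ Finset.range k,
      (((x (d2 (-1 + 2 * ((j : ℝ) + 1) / k))).1 - (x (d2 (-1 + 2 * (j : ℝ) / k))).1) ^ 2 +
       ((x (d2 (-1 + 2 * ((j : ℝ) + 1) / k))).2 - (x (d2 (-1 + 2 * (j : ℝ) / k))).2) ^ 2)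
        / (2 / (k : ℝ))) := by
  intro x d1 d2
  have hk0 : (k : ℝ) ≠ 0 := Nat.cast_ne_zero.mpr (Nat.one_le_iff_ne_zero.mp hk)
  rw [← sub_eq_zero, ← Finset.sum_sub_distrib]
  have key : ∀ j ∈ Finset.range k,
      ((((x (d1 (-1 + 2 * ((j : ℝ) + 1) / k))).1 - (x (d1 (-1 + 2 * (j : ℝ) / k))).1) ^ 2 +
       ((x (d1 (-1 + 2 * ((j : ℝ) + 1) / k))).2 - (x (d1 (-1 + 2 * (j : ℝ) / k))).2) ^ 2)
        / (2 / (k : ℝ)))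
      - ((((x (d2 (-1 + 2 * ((j : ℝ) + 1) / k))).1 - (x (d2 (-1 + 2 * (j : ℝ) / k))).1) ^ 2 +
       ((x (d2 (-1 + 2 * ((j : ℝ) + 1) / k))).2 - (x (d2 (-1 + 2 * (j : ℝ) / k))).2) ^ 2)
        / (2 / (k : ℝ)))
      = (32 * u0 * α * (α ^ 2 + β ^ 2) / (k : ℝ) ^ 2) * (2 * (j : ℝ) + 1 - k) := by
    intro j _
    simp only [x, d1, d2]
    field_simp
    ring
  rw [Finset.sum_congr rfl key, ← Finset.mul_sum]
  have hsum : ∑ j ∈ Finset.range k, (2 * (j : ℝ) + 1 - k) = 0 := by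
    have h2 : ((∑ i ∈ Finset.range k, i) * 2 : ℕ) = k * (k - 1) :=
      Finset.sum_range_id_mul_two k
    have h2' : (∑ i ∈ Finset.range k, (i : ℝ)) * 2 = k * ((k : ℝ) - 1) := by
      have := congrArg (fun n : ℕ => (n : ℝ)) h2
      push_cast [Nat.cast_sub hk] at this
      simpa using this
    simp only [Finset.sum_sub_distrib, Finset.sum_add_distrib]
    rw [← Finset.mul_sum]
    simp only [Finset.sum_const, Finset.card_range, nsmul_eq_mul, mul_one]
    nlinarith [h2']
  rw [hsum, mul_zero]
end

section
/- Let U, V : ℝ → ℝ be continuously differentiable, let a ∈ ℝ, and let u, v : ℝ → ℝ be twice differentiable functions such that U(u(t)) − a > 0 and a + V(v(t)) > 0 for all t, and satisfying the first-order system u̇(t) = √(U(u(t)) − a) / (U(u(t)) + V(v(t))), v̇(t) = √(a + V(v(t))) / (U(u(t)) + V(v(t))). Then (u(t), v(t)) satisfies the geodesic equations of the isothermal Liouville metric g11 = g22 = U(u) + V(v), g12 = 0: 2(U(u) + V(v)) ü + U′(u) u̇² + 2 V′(v) u̇ v̇ − U′(u) v̇² = 0 and 2(U(u) + V(v)) v̈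 − V′(v) u̇² + 2 U′(u) u̇ v̇ + V′(v) v̇² = 0. -/
/-! Write `E = U(u) + V(v)`, `p = √(U(u) − a)`, `q = √(a + V(v))`, so `u̇ = p / E`, `v̇ = q / E`.
Since `p² + q² = E`, the curve has unit speed: `E (u̇² + v̇²) = 1`. The chain rule gives
`ṗ = U′(u) u̇ / (2p) = U′(u) / (2E)`, hence `2E ü = U′(u) / E − 2 u̇ Ė` with `Ė = U′(u) u̇ + V′(v) v̇`;
replacing `1 / E` by `u̇² + v̇²` turns this into the first geodesic equation, and symmetrically
for `v`. -/

open Filter Topology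

theorem two_mul_mul_deriv_deriv_of_deriv_eq_sqrt_div {w F E : ℝ → ℝ} {A E' t : ℝ}
    (hw : deriv w =ᶠ[𝓝 t] fun s => √(F s) / E s) (hF : HasDerivAt F (A * deriv w t) t)
    (hE : HasDerivAt E E' t) (hF_pos : 0 < F t) (hE_ne : E t ≠ 0) :
    2 * E t * deriv (deriv w) t = A / E t - 2 * deriv w t * E' := by
  have hwt : deriv w t = √(F t) / E t := hw.eq_of_nhds
  have hw' := ((hF.sqrt hF_pos.ne').div hE hE_ne).congr_of_eventuallyEq hw
  rw [hw'.deriv, hwt]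
  field_simp

theorem liouville_first_order_system_satisfies_geodesic_equations_general
    (U V : ℝ → ℝ) (hU : ContDiff ℝ 1 U) (hV : ContDiff ℝ 1 V)
    (a : ℝ) (u v : ℝ → ℝ)
    (hu1 : ∀ t, DifferentiableAt ℝ u t)
    (hv1 : ∀ t, DifferentiableAt ℝ v t)
    (hUpos : ∀ t, 0 < U (u t) - a)
    (hVpos : ∀ t, 0 < a + V (v t))
    (hueq : ∀ t, deriv u t = Real.sqrt (U (u t) - a) / (U (u t) + V (v t)))
    (hveq : ∀ t, deriv v t = Real.sqrt (a + V (v t)) / (U (u t) + V (v t))) :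
    ∀ t : ℝ,
      2 * (U (u t) + V (v t)) * deriv (deriv u) t +
        deriv U (u t) * (deriv u t) ^ 2 +
        2 * deriv V (v t) * deriv u t * deriv v t -
        deriv U (u t) * (deriv v t) ^ 2 = 0 ∧
      2 * (U (u t) + V (v t)) * deriv (deriv v) t -
        deriv V (v t) * (deriv u t) ^ 2 +
        2 * deriv U (u t) * deriv u t * deriv v t +
        deriv V (v t) * (deriv v t) ^ 2 = 0 := by
  intro t
  have hE_pos : 0 < U (u t) + V (v t) := by linarith [hUpos t, hVpos t]
  have hunit_speed : (U (u t) + V (v t))⁻¹ = deriv u t ^ 2 + deriv v t ^ 2 := by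
    rw [hueq, hveq, div_pow, div_pow, Real.sq_sqrt (hUpos t).le, Real.sq_sqrt (hVpos t).le]
    field_simp
    ring
  have hUu : HasDerivAt (fun s => U (u s)) (deriv U (u t) * deriv u t) t :=
    ((hU.differentiable one_ne_zero _).hasDerivAt).comp t (hu1 t).hasDerivAt
  have hVv : HasDerivAt (fun s => V (v s)) (deriv V (v t) * deriv v t) t :=
    ((hV.differentiable one_ne_zero _).hasDerivAt).comp t (hv1 t).hasDerivAt
  have hu'' := two_mul_mul_deriv_deriv_of_deriv_eq_sqrt_div (F := fun s => U (u s) - a)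
    (.of_forall hueq) (hUu.sub_const a) (hUu.add hVv) (hUpos t) hE_pos.ne'
  have hv'' := two_mul_mul_deriv_deriv_of_deriv_eq_sqrt_div (F := fun s => a + V (v s))
    (.of_forall hveq) (hVv.const_add a) (hUu.add hVv) (hVpos t) hE_pos.ne'
  constructor
  · linear_combination hu'' + deriv U (u t) * hunit_speed
  · linear_combination hv'' + deriv V (v t) * hunit_speed

/-- Solutions of the first-order system
`u̇ = √(U(u) − a)/(U(u) + V(v))`, `v̇ = √(a + V(v))/(U(u) + V(v))`
satisfy the geodesic equations of the isothermal Liouville metric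
`g11 = g22 = U(u) + V(v)`, `g12 = 0`. -/
theorem liouville_first_order_system_satisfies_geodesic_equations
    (U V : ℝ → ℝ) (hU : ContDiff ℝ 1 U) (hV : ContDiff ℝ 1 V)
    (a : ℝ) (u v : ℝ → ℝ)
    (hu1 : ∀ t, DifferentiableAt ℝ u t)
    (hu2 : ∀ t, DifferentiableAt ℝ (deriv u) t)
    (hv1 : ∀ t, DifferentiableAt ℝ v t)
    (hv2 : ∀ t, DifferentiableAt ℝ (deriv v) t)
    (hUpos : ∀ t, 0 < U (u t) - a)
    (hVpos : ∀ t, 0 < a + V (v t))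
    (hueq : ∀ t, deriv u t = Real.sqrt (U (u t) - a) / (U (u t) + V (v t)))
    (hveq : ∀ t, deriv v t = Real.sqrt (a + V (v t)) / (U (u t) + V (v t))) :
    ∀ t : ℝ,
      2 * (U (u t) + V (v t)) * deriv (deriv u) t +
        deriv U (u t) * (deriv u t) ^ 2 +
        2 * deriv V (v t) * deriv u t * deriv v t -
        deriv U (u t) * (deriv v t) ^ 2 = 0 ∧
      2 * (U (u t) + V (v t)) * deriv (deriv v) t -
        deriv V (v t) * (deriv u t) ^ 2 +
        2 * deriv U (u t) * deriv u t * deriv v t +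
        deriv V (v t) * (deriv v t) ^ 2 = 0 :=
  liouville_first_order_system_satisfies_geodesic_equations_general U V hU hV a u v hu1 hv1 hUpos
    hVpos hueq hveq
end
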